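/- arXiv:1611.10268 — 7 statements merged into one kernel-verified Lean document; each statement's English description precedes it below -/
import Mathlib

section
/- Let p, q be real numbers with 0 < p ≤ q and p + q < 1, and let a, b be natural numbers with a ≤ b and b ≥ 1. Then p^a·(1−p)^b ≥ q^b·(1−q)^a if and only if S(p,q) ≥ a/b, and moreover p^a·(1−p)^b = q^b·(1−q)^a if and only if S(p,q) = a/b. -/
open Real Set

/-- The parameter space `T = {(p,q) : 0 ≤ p ≤ q, p + q < 1} \ {(0,0)}`. -/
def bacT : Set (ℝ × ℝ) := {pq | 0 ≤ pq.1 ∧ pq.1 ≤ pq.2 ∧ pq.1 + pq.2 < 1 ∧ pq ≠ (0, 0)}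

/-- The BAC-function `S`. -/
noncomputable def bacS (p q : ℝ) : ℝ :=
  if p = 0 then 0 else (Real.log (1 - p) - Real.log q) / (Real.log (1 - q) - Real.log p)

/-- Transition probability of the n-fold binary asymmetric channel `BAC^n(p,q)`:
`bacPr p q x y = Pr(x|y)`. -/
noncomputable def bacPr (p q : ℝ) {n : ℕ} (x y : Fin n → Bool) : ℝ :=
  ∏ i, if x i then (if y i then 1 - q else p) else (if y i then q else 1 - p)

/-- The channels `BAC(p,q)` and `BAC(p',q')` are `n`-equivalent. -/
def nEquiv (n : ℕ) (p q p' q' : ℝ) : Prop :=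
  ∀ x y z : Fin n → Bool,
    (bacPr p q x y ≤ bacPr p q x z ↔ bacPr p' q' x y ≤ bacPr p' q' x z)

/-- A point `(p,q) ∈ T` is `n`-stable if all nearby points of `T` are `n`-equivalent to it. -/
def nStable (n : ℕ) (pq : ℝ × ℝ) : Prop :=
  ∃ ε > 0, ∀ pq' ∈ bacT, ‖pq' - pq‖ < ε → nEquiv n pq.1 pq.2 pq'.1 pq'.2

lemma log_pow_mul_pow {x y : ℝ} (hx : x ≠ 0) (hy : y ≠ 0) (m n : ℕ) :
    log (x ^ m * y ^ n) = m * log x + n * log y := by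
  rw [log_mul (pow_ne_zero m hx) (pow_ne_zero n hy), log_pow, log_pow]

lemma log_lt_log_one_sub {p q : ℝ} (hp : 0 < p) (hsum : p + q < 1) :
    log p < log (1 - q) :=
  log_lt_log hp (by linarith)

-- The denominator is positive, so both comparisons with `a / b` become comparisons of logarithms.
lemma bacS_sub_div_eq {p q : ℝ} (hp : 0 < p) (hq : 0 < q) (hsum : p + q < 1)
    (a : ℕ) {b : ℕ} (hb : b ≠ 0) :
    bacS p q - a / b = (log (p ^ a * (1 - p) ^ b) - log (q ^ b * (1 - q) ^ a)) /
      (b * (log (1 - q) - log p)) := by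
  have hD : log (1 - q) - log p ≠ 0 := (sub_pos.2 (log_lt_log_one_sub hp hsum)).ne'
  rw [bacS, if_neg hp.ne', log_pow_mul_pow hp.ne' (by linarith),
    log_pow_mul_pow hq.ne' (by linarith)]
  field_simp
  ring

theorem stmt0_general (p q : ℝ) (hp : 0 < p) (hpq : p ≤ q) (hsum : p + q < 1)
    (a b : ℕ) (hb : 1 ≤ b) :
    (p ^ a * (1 - p) ^ b ≥ q ^ b * (1 - q) ^ a ↔ bacS p q ≥ (a : ℝ) / (b : ℝ)) ∧
    (p ^ a * (1 - p) ^ b = q ^ b * (1 - q) ^ a ↔ bacS p q = (a : ℝ) / (b : ℝ)) := by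
  have hq : 0 < q := hp.trans_le hpq
  have hP : 0 < p ^ a * (1 - p) ^ b := mul_pos (pow_pos hp a) (pow_pos (by linarith) b)
  have hQ : 0 < q ^ b * (1 - q) ^ a := mul_pos (pow_pos hq b) (pow_pos (by linarith) a)
  have hbD : 0 < (b : ℝ) * (log (1 - q) - log p) :=
    mul_pos (by exact_mod_cast hb) (sub_pos.2 (log_lt_log_one_sub hp hsum))
  have key := bacS_sub_div_eq hp hq hsum a (Nat.one_le_iff_ne_zero.1 hb)
  constructor
  · rw [ge_iff_le, ge_iff_le, ← log_le_log_iff hQ hP, ← sub_nonneg, ← sub_nonneg (a := bacS p q),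
      key, le_div_iff₀ hbD, zero_mul]
  · rw [← log_injOn_pos.eq_iff hP hQ, ← sub_eq_zero, ← sub_eq_zero (a := bacS p q), key,
      div_eq_zero_iff, or_iff_left hbD.ne']

theorem stmt0 (p q : ℝ) (hp : 0 < p) (hpq : p ≤ q) (hsum : p + q < 1)
    (a b : ℕ) (hab : a ≤ b) (hb : 1 ≤ b) :
    (p ^ a * (1 - p) ^ b ≥ q ^ b * (1 - q) ^ a ↔ bacS p q ≥ (a : ℝ) / (b : ℝ)) ∧
    (p ^ a * (1 - p) ^ b = q ^ b * (1 - q) ^ a ↔ bacS p q = (a : ℝ) / (b : ℝ)) :=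
  stmt0_general p q hp hpq hsum a b hb
end

section
/- For every n ≥ 1, a point (p,q) ∈ T is n-stable if and only if for all natural numbers a, b, c, d, a', b', c', d' with a+b+c+d = n, a'+b'+c'+d' = n, a+d = a'+d', and (a,b,c,d) ≠ (a',b',c',d'), one has p^a·(1−p)^b·q^c·(1−q)^d ≠ p^{a'}·(1−p)^{b'}·q^{c'}·(1−q)^{d'}. -/
open Real Set
set_option maxHeartbeats 1000000

namespace BacAux

open Finset

def cA {n : ℕ} (x y : Fin n → Bool) : ℕ := (univ.filter fun i => x i = true ∧ y i = false).card
def cB {n : ℕ} (x y : Fin n → Bool) : ℕ := (univ.filter fun i => x i = false ∧ y i = false).card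
def cC {n : ℕ} (x y : Fin n → Bool) : ℕ := (univ.filter fun i => x i = false ∧ y i = true).card
def cD {n : ℕ} (x y : Fin n → Bool) : ℕ := (univ.filter fun i => x i = true ∧ y i = true).card

theorem bacPr_eq (p q : ℝ) {n : ℕ} (x y : Fin n → Bool) :
    bacPr p q x y = p ^ cA x y * (1-p) ^ cB x y * q ^ cC x y * (1-q) ^ cD x y := by
  classical
  unfold bacPr cA cB cC cD
  rw [← Finset.prod_filter_mul_prod_filter_not univ (fun i => x i = true)]
  rw [← Finset.prod_filter_mul_prod_filter_not (univ.filter fun i => x i = true) (fun i => y i = true)]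
  rw [← Finset.prod_filter_mul_prod_filter_not (univ.filter fun i => ¬ (x i = true)) (fun i => y i = true)]
  rw [Finset.filter_filter, Finset.filter_filter, Finset.filter_filter, Finset.filter_filter]
  have h1 : ∀ i ∈ univ.filter (fun i => x i = true ∧ y i = true),
      (if x i then (if y i then 1 - q else p) else (if y i then q else 1 - p)) = 1 - q := by
    intro i hi; simp only [mem_filter] at hi; simp [hi.2.1, hi.2.2]
  have h2 : ∀ i ∈ univ.filter (fun i => x i = true ∧ ¬ y i = true),
      (if x i then (if y i then 1 - q else p) else (if y i then q else 1 - p)) = p := by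
    intro i hi; simp only [mem_filter] at hi; simp [hi.2.1, hi.2.2]
  have h3 : ∀ i ∈ univ.filter (fun i => ¬ x i = true ∧ y i = true),
      (if x i then (if y i then 1 - q else p) else (if y i then q else 1 - p)) = q := by
    intro i hi; simp only [mem_filter] at hi; simp [hi.2.1, hi.2.2]
  have h4 : ∀ i ∈ univ.filter (fun i => ¬ x i = true ∧ ¬ y i = true),
      (if x i then (if y i then 1 - q else p) else (if y i then q else 1 - p)) = 1 - p := by
    intro i hi; simp only [mem_filter] at hi; simp [hi.2.1, hi.2.2]
  rw [Finset.prod_congr rfl h1, Finset.prod_congr rfl h2, Finset.prod_congr rfl h3,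
    Finset.prod_congr rfl h4, Finset.prod_const, Finset.prod_const, Finset.prod_const,
    Finset.prod_const]
  simp only [Bool.not_eq_true]
  ring

theorem cardEq {n : ℕ} (P Q : Fin n → Prop) [DecidablePred P] [DecidablePred Q]
    (h : ∀ i, P i ↔ Q i) : (univ.filter P).card = (univ.filter Q).card := by
  congr 1; apply Finset.filter_congr; intro i _; simp [h i]

theorem cSum {n : ℕ} (x y : Fin n → Bool) : cA x y + cB x y + cC x y + cD x y = n := by
  classical
  unfold cA cB cC cD
  have hn : ((univ : Finset (Fin n))).card = n := by simp
  refine Eq.trans ?_ hn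
  rw [← Finset.card_filter_add_card_filter_not (s := (univ : Finset (Fin n)))
    (p := fun i => x i = true)]
  rw [← Finset.card_filter_add_card_filter_not (s := univ.filter fun i => x i = true)
    (p := fun i => y i = true)]
  rw [← Finset.card_filter_add_card_filter_not (s := univ.filter fun i => ¬ x i = true)
    (p := fun i => y i = true)]
  rw [Finset.filter_filter, Finset.filter_filter, Finset.filter_filter, Finset.filter_filter]
  have e1 : cA x y = (univ.filter fun i => x i = true ∧ ¬ y i = true).card :=
    cardEq _ _ (by intro i; simp [Bool.not_eq_true])
  have e2 : cB x y = (univ.filter fun i => ¬ x i = true ∧ ¬ y i = true).card :=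
    cardEq _ _ (by intro i; simp [Bool.not_eq_true])
  have e3 : cC x y = (univ.filter fun i => ¬ x i = true ∧ y i = true).card :=
    cardEq _ _ (by intro i; simp [Bool.not_eq_true])
  show cA x y + cB x y + cC x y + cD x y = _
  rw [e1, e2, e3]; unfold cD; ring

theorem cWt {n : ℕ} (x y : Fin n → Bool) :
    cA x y + cD x y = (univ.filter fun i => x i = true).card := by
  classical
  conv_rhs => rw [← Finset.card_filter_add_card_filter_not
    (s := univ.filter fun i => x i = true) (p := fun i => y i = true)]
  rw [Finset.filter_filter, Finset.filter_filter]
  unfold cA cD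
  rw [cardEq (fun i => x i = true ∧ y i = false) (fun i => x i = true ∧ ¬ y i = true)
    (by intro i; simp [Bool.not_eq_true])]
  ring

theorem cardIco (n L U : ℕ) (hU : U ≤ n) :
    ((univ : Finset (Fin n)).filter fun i => L ≤ i.val ∧ i.val < U).card = U - L := by
  classical
  rw [← Nat.card_Ico L U]
  apply Finset.card_bij (fun (a : Fin n) _ => a.val)
  · intro a ha; simp only [mem_filter, mem_univ, true_and] at ha; simp [Finset.mem_Ico, ha.1, ha.2]
  · intro a ha b hb h; exact Fin.ext h
  · intro b hb
    rw [Finset.mem_Ico] at hb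
    exact ⟨⟨b, lt_of_lt_of_le hb.2 hU⟩, by simp [hb.1, hb.2], rfl⟩

def xw (n w : ℕ) : Fin n → Bool := fun i => decide (i.val < w)
def yw (n w d c : ℕ) : Fin n → Bool := fun i => decide (i.val < d ∨ (w ≤ i.val ∧ i.val < w + c))

theorem counts (n w d c : ℕ) (hd : d ≤ w) (hc : w + c ≤ n) :
    cA (xw n w) (yw n w d c) = w - d ∧ cB (xw n w) (yw n w d c) = n - w - c ∧
    cC (xw n w) (yw n w d c) = c ∧ cD (xw n w) (yw n w d c) = d := by
  classical
  have hw : w ≤ n := le_trans (Nat.le_add_right _ _) hc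
  refine ⟨?_, ?_, ?_, ?_⟩
  · unfold cA xw yw
    rw [cardEq _ (fun i : Fin n => d ≤ i.val ∧ i.val < w) (by intro i; simp; omega)]
    exact cardIco n d w hw
  · unfold cB xw yw
    rw [cardEq _ (fun i : Fin n => w + c ≤ i.val ∧ i.val < n)
      (by intro i; have := i.isLt; simp; omega)]
    rw [cardIco n (w+c) n le_rfl]; omega
  · unfold cC xw yw
    rw [cardEq _ (fun i : Fin n => w ≤ i.val ∧ i.val < w + c) (by intro i; simp; omega)]
    rw [cardIco n w (w+c) hc]; omega
  · unfold cD xw yw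
    rw [cardEq _ (fun i : Fin n => 0 ≤ i.val ∧ i.val < d) (by intro i; simp; omega)]
    rw [cardIco n 0 d (le_trans (le_trans hd (Nat.le_add_right _ _)) hc)]; omega

theorem lemA (α β C u v : ℝ) (hu : 0 < u) (hv : v < 1) (huv : u < v)
    (hab : ¬ (α = 0 ∧ β = 0)) :
    ∃ t, u < t ∧ t < v ∧ α * Real.log t + β * Real.log (1-t) ≠ C := by
  by_contra hcon; push_neg at hcon
  have key : ∀ t, u < t → t < v → α * (1 - t) - β * t = 0 := by
    intro t ht1 ht2
    have ht0 : 0 < t := lt_trans hu ht1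
    have ht1' : t < 1 := lt_trans ht2 hv
    have hd1 : HasDerivAt (fun s => Real.log s) t⁻¹ t := Real.hasDerivAt_log (ne_of_gt ht0)
    have hd2 : HasDerivAt (fun s : ℝ => 1 - s) (-1) t := by
      simpa using (hasDerivAt_id' (x := t)).const_sub (1:ℝ)
    have hd3 : HasDerivAt (fun s : ℝ => Real.log (1 - s)) ((1-t)⁻¹ * (-1)) t :=
      (Real.hasDerivAt_log (by linarith)).comp t hd2
    have hd : HasDerivAt (fun s : ℝ => α * Real.log s + β * Real.log (1 - s))
        (α * t⁻¹ + β * ((1-t)⁻¹ * (-1))) t := (hd1.const_mul α).add (hd3.const_mul β)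
    have heq : (fun s : ℝ => α * Real.log s + β * Real.log (1 - s)) =ᶠ[nhds t]
        (fun _ => C) := by
      filter_upwards [Ioo_mem_nhds ht1 ht2] with s hs
      exact hcon s hs.1 hs.2
    have hd0 : HasDerivAt (fun s : ℝ => α * Real.log s + β * Real.log (1 - s)) 0 t := by
      exact (hasDerivAt_const t C).congr_of_eventuallyEq heq
    have := hd.unique hd0
    have htne : t ≠ 0 := ne_of_gt ht0
    have htne1 : (1:ℝ) - t ≠ 0 := by linarith
    field_simp at this
    linarith [this]
  set t₁ := u + (v-u)/3 with ht1def
  set t₂ := u + 2*(v-u)/3 with ht2def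
  have k1 := key t₁ (by simp [ht1def]; linarith) (by simp [ht1def]; linarith)
  have k2 := key t₂ (by simp [ht2def]; linarith) (by simp [ht2def]; linarith)
  have hne : t₁ ≠ t₂ := by simp [ht1def, ht2def]; intro h; linarith
  have hs : α + β = 0 := by
    have : (α + β) * (t₂ - t₁) = 0 := by ring_nf; ring_nf at k1 k2; linarith
    rcases mul_eq_zero.1 this with h | h
    · exact h
    · exact absurd (by linarith : t₁ = t₂) hne
  have ha : α = 0 := by
    have : α * (1 - t₁) - β * t₁ = 0 := k1
    have hb : β = -α := by linarith
    rw [hb] at this; ring_nf at this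
    nlinarith [this]
  exact hab ⟨ha, by linarith⟩

theorem contPr {n : ℕ} (x y : Fin n → Bool) :
    Continuous fun r : ℝ × ℝ => bacPr r.1 r.2 x y := by
  unfold bacPr
  apply continuous_finset_prod
  intro i _
  cases hx : x i <;> cases hy : y i <;>
    simp only [hx, hy, Bool.false_eq_true, if_true, if_false] <;> fun_prop

theorem logM (t q : ℝ) (h1 : 0 < t) (h2 : t < 1) (h3 : 0 < q) (h4 : q < 1) (a b c d : ℕ) :
    Real.log (t^a * (1-t)^b * q^c * (1-q)^d) =
      a * Real.log t + b * Real.log (1-t) + c * Real.log q + d * Real.log (1-q) := by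
  have e2 : (0:ℝ) < 1 - t := by linarith
  have e4 : (0:ℝ) < 1 - q := by linarith
  rw [Real.log_mul (by positivity) (by positivity), Real.log_mul (by positivity) (by positivity),
    Real.log_mul (by positivity) (by positivity), Real.log_pow, Real.log_pow, Real.log_pow,
    Real.log_pow]

end BacAux

open BacAux

theorem stmt2 (n : ℕ) (hn : 1 ≤ n) (p q : ℝ) (hpq : (p, q) ∈ bacT) :
    nStable n (p, q) ↔
      ∀ a b c d a' b' c' d' : ℕ,
        a + b + c + d = n → a' + b' + c' + d' = n → a + d = a' + d' →
        (a, b, c, d) ≠ (a', b', c', d') →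
        p ^ a * (1 - p) ^ b * q ^ c * (1 - q) ^ d ≠
          p ^ a' * (1 - p) ^ b' * q ^ c' * (1 - q) ^ d' := by
  obtain ⟨hp0, hpq2, hsum, hne0⟩ := hpq
  simp only at hp0 hpq2 hsum
  have hq0 : 0 < q := by
    rcases lt_or_eq_of_le (le_trans hp0 hpq2) with h | h
    · exact h
    · exact absurd (by rw [Prod.mk.injEq]; constructor <;> linarith) hne0
  have hq1 : q < 1 := by linarith
  constructor
  · -- stability implies injectivity
    rintro ⟨ε, hε, hst⟩ a b c d a' b' c' d' h1 h2 h3 hne heq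
    set w := a + d with hw
    -- the words
    set x := xw n w with hx
    set y := yw n w d c with hy
    set z := yw n w d' c' with hz
    have hcy := counts n w d c (by omega) (by omega)
    have hcz := counts n w d' c' (by omega) (by omega)
    have ey : ∀ t s : ℝ, bacPr t s x y = t^a * (1-t)^b * s^c * (1-s)^d := by
      intro t s
      rw [bacPr_eq, hcy.1, hcy.2.1, hcy.2.2.1, hcy.2.2.2]
      congr 2 <;> congr 2 <;> omega
    have ez : ∀ t s : ℝ, bacPr t s x z = t^a' * (1-t)^b' * s^c' * (1-s)^d' := by
      intro t s
      rw [bacPr_eq, hcz.1, hcz.2.1, hcz.2.2.1, hcz.2.2.2]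
      congr 2 <;> congr 2 <;> omega
    -- choose the interval
    set α : ℝ := (a:ℝ) - a' with hα
    set β : ℝ := (b:ℝ) - b' with hβ
    set C : ℝ := ((c':ℝ) - c) * Real.log q + ((d':ℝ) - d) * Real.log (1-q) with hC
    have hab : ¬ (α = 0 ∧ β = 0) := by
      rintro ⟨h4, h5⟩
      have : a = a' := by exact_mod_cast sub_eq_zero.1 h4
      have : b = b' := by exact_mod_cast sub_eq_zero.1 h5
      apply hne
      simp only [Prod.mk.injEq]
      omega
    obtain ⟨u, v, hu, hv, huv, hprop⟩ :
        ∃ u v : ℝ, 0 < u ∧ v < 1 ∧ u < v ∧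
          ∀ t, u < t → t < v → (0 < t ∧ t ≤ q ∧ t + q < 1 ∧ |t - p| < ε) := by
      by_cases hp : p = 0
      · refine ⟨min (ε/2) (min q (1-q)) / 2, min (ε/2) (min q (1-q)), ?_, ?_, ?_, ?_⟩
        · exact div_pos (lt_min (by linarith) (lt_min hq0 (by linarith))) (by norm_num)
        · have : min q (1-q) ≤ 1 - q := min_le_right _ _
          calc min (ε/2) (min q (1-q)) ≤ min q (1-q) := min_le_right _ _
            _ ≤ 1 - q := min_le_right _ _
            _ < 1 := by linarith
        · have h0 : 0 < min (ε/2) (min q (1-q)) := lt_min (by linarith) (lt_min hq0 (by linarith))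
          linarith
        · intro t ht1 ht2
          have h0 : 0 < min (ε/2) (min q (1-q)) / 2 := div_pos (lt_min (by linarith) (lt_min hq0 (by linarith))) (by norm_num)
          have hm1 : min (ε/2) (min q (1-q)) ≤ ε/2 := min_le_left _ _
          have hm2 : min (ε/2) (min q (1-q)) ≤ q := le_trans (min_le_right _ _) (min_le_left _ _)
          have hm3 : min (ε/2) (min q (1-q)) ≤ 1-q := le_trans (min_le_right _ _) (min_le_right _ _)
          refine ⟨by linarith, by linarith, by linarith, ?_⟩
          rw [hp, sub_zero, abs_of_pos (by linarith)]
          linarith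
      · have hp' : 0 < p := lt_of_le_of_ne hp0 (Ne.symm hp)
        refine ⟨p - min (ε/2) p / 2, p, ?_, by linarith, ?_, ?_⟩
        · have : min (ε/2) p ≤ p := min_le_right _ _
          linarith
        · have h0 : 0 < min (ε/2) p := lt_min (by linarith) hp'
          linarith
        · intro t ht1 ht2
          have h0 : 0 < min (ε/2) p := lt_min (by linarith) hp'
          have hm1 : min (ε/2) p ≤ ε/2 := min_le_left _ _
          have hm2 : min (ε/2) p ≤ p := min_le_right _ _
          refine ⟨by linarith, by linarith, by linarith, ?_⟩
          rw [abs_of_nonpos (by linarith)]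
          linarith
    obtain ⟨t, htu, htv, hVal⟩ := lemA α β C u v hu hv huv hab
    obtain ⟨ht0, htq, htsum, htd⟩ := hprop t htu htv
    have ht1 : t < 1 := by linarith
    have hmem : ((t, q) : ℝ × ℝ) ∈ bacT := by
      refine ⟨le_of_lt ht0, htq, htsum, ?_⟩
      intro h
      rw [Prod.mk.injEq] at h
      linarith [h.1]
    have hnorm : ‖((t, q) : ℝ × ℝ) - (p, q)‖ < ε := by
      have : ((t, q) : ℝ × ℝ) - (p, q) = (t - p, 0) := by
        simp [Prod.ext_iff]
      rw [this, Prod.norm_def]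
      simp [Real.norm_eq_abs]
      exact htd
    have hEq := hst (t, q) hmem hnorm
    have hb1 := (hEq x y z).1 (by rw [ey, ez, heq])
    have hb2 := (hEq x z y).1 (by rw [ey, ez, heq])
    have hMeq : bacPr t q x y = bacPr t q x z := le_antisymm hb1 hb2
    rw [ey, ez] at hMeq
    apply hVal
    have hL := congrArg Real.log hMeq
    rw [logM t q ht0 ht1 hq0 hq1, logM t q ht0 ht1 hq0 hq1] at hL
    rw [hα, hβ, hC]
    linarith [hL]
  · -- injectivity implies stability
    intro H
    have key : ∀ T : (Fin n → Bool) × (Fin n → Bool) × (Fin n → Bool),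
        ∀ᶠ r : ℝ × ℝ in nhds (p, q),
          (bacPr p q T.1 T.2.1 ≤ bacPr p q T.1 T.2.2 ↔
            bacPr r.1 r.2 T.1 T.2.1 ≤ bacPr r.1 r.2 T.1 T.2.2) := by
      rintro ⟨x, y, z⟩
      dsimp only
      by_cases hcc : (cA x y, cB x y, cC x y, cD x y) = (cA x z, cB x z, cC x z, cD x z)
      · apply Filter.Eventually.of_forall
        intro r
        simp only [Prod.mk.injEq] at hcc
        obtain ⟨e1, e2, e3, e4⟩ := hcc
        have hconst : ∀ t s : ℝ, bacPr t s x y = bacPr t s x z := by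
          intro t s
          rw [bacPr_eq, bacPr_eq, e1, e2, e3, e4]
        rw [hconst p q, hconst r.1 r.2]
        constructor <;> intro _ <;> exact le_refl _
      · have hneq : bacPr p q x y ≠ bacPr p q x z := by
          rw [bacPr_eq, bacPr_eq]
          exact H (cA x y) (cB x y) (cC x y) (cD x y) (cA x z) (cB x z) (cC x z) (cD x z)
            (cSum x y) (cSum x z) (by rw [cWt, cWt]) hcc
        have hcy : ContinuousAt (fun r : ℝ × ℝ => bacPr r.1 r.2 x y) (p, q) :=
          (contPr x y).continuousAt
        have hcz : ContinuousAt (fun r : ℝ × ℝ => bacPr r.1 r.2 x z) (p, q) :=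
          (contPr x z).continuousAt
        rcases lt_or_gt_of_ne hneq with h | h
        · filter_upwards [hcy.eventually_lt hcz h] with r hr
          constructor
          · intro _; exact le_of_lt hr
          · intro _; exact le_of_lt h
        · have : ∀ᶠ r : ℝ × ℝ in nhds (p, q),
              bacPr r.1 r.2 x z < bacPr r.1 r.2 x y := hcz.eventually_lt hcy h
          filter_upwards [this] with r hr
          constructor
          · intro h'; exact absurd h' (not_le.2 h)
          · intro h'; exact absurd h' (not_le.2 hr)
    have hall : ∀ᶠ r : ℝ × ℝ in nhds (p, q),
        ∀ T : (Fin n → Bool) × (Fin n → Bool) × (Fin n → Bool),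
          (bacPr p q T.1 T.2.1 ≤ bacPr p q T.1 T.2.2 ↔
            bacPr r.1 r.2 T.1 T.2.1 ≤ bacPr r.1 r.2 T.1 T.2.2) :=
      Filter.eventually_all.2 key
    rw [Metric.eventually_nhds_iff] at hall
    obtain ⟨ε, hε, hb⟩ := hall
    refine ⟨ε, hε, ?_⟩
    intro pq' _ hnorm x y z
    have hd : dist pq' (p, q) < ε := by
      rw [dist_eq_norm]; exact hnorm
    exact hb hd (x, y, z)
end

section
/- Let n ≥ 1 and let (p,q) ∈ T be an n-unstable point. Then there exist natural numbers a, b with a ≤ b, b ≥ 1, gcd(a,b) = 1 and a + b ≤ n such that S(p,q) = a/b. -/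
open Real Set

def dZ (xb yb zb : Bool) : ℤ :=
  if xb then (if yb then 1 else 0) - (if zb then 1 else 0) else 0

def eZ (xb yb zb : Bool) : ℤ :=
  if xb then 0 else (if yb then 1 else 0) - (if zb then 1 else 0)

lemma bacPr_le_iff {n : ℕ} (p q : ℝ) (hp : 0 < p) (hq : 0 < q) (h1 : p + q < 1)
    (x y z : Fin n → Bool) :
    (bacPr p q x y ≤ bacPr p q x z) ↔
      ((∑ i, dZ (x i) (y i) (z i) : ℤ) : ℝ) * (Real.log (1 - q) - Real.log p)
        - ((∑ i, eZ (x i) (y i) (z i) : ℤ) : ℝ) * (Real.log (1 - p) - Real.log q) ≤ 0 := by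
  have hq1 : q < 1 := by linarith
  have hp1 : p < 1 := by linarith
  set f : (Fin n → Bool) → Fin n → ℝ := fun w i =>
    if x i then (if w i then 1 - q else p) else (if w i then q else 1 - p) with hf
  have hfpos : ∀ w i, 0 < f w i := by
    intro w i
    simp only [hf]
    rcases x i <;> rcases w i <;> simp <;> linarith
  have hprodpos : ∀ w, 0 < bacPr p q x w := by
    intro w
    exact Finset.prod_pos fun i _ => hfpos w i
  have hlog : ∀ w, Real.log (bacPr p q x w) = ∑ i, Real.log (f w i) := by
    intro w
    exact Real.log_prod fun i _ => (hfpos w i).ne'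
  rw [← Real.log_le_log_iff (hprodpos y) (hprodpos z), hlog, hlog]
  have key : ∑ i, Real.log (f y i) - ∑ i, Real.log (f z i)
      = ((∑ i, dZ (x i) (y i) (z i) : ℤ) : ℝ) * (Real.log (1 - q) - Real.log p)
        - ((∑ i, eZ (x i) (y i) (z i) : ℤ) : ℝ) * (Real.log (1 - p) - Real.log q) := by
    rw [← Finset.sum_sub_distrib]
    push_cast
    rw [Finset.sum_mul, Finset.sum_mul, ← Finset.sum_sub_distrib]
    refine Finset.sum_congr rfl fun i _ => ?_
    simp only [hf, dZ, eZ]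
    rcases x i <;> rcases y i <;> rcases z i <;> simp <;> ring
  constructor
  · intro h; rw [← key]; linarith
  · intro h; rw [← key] at h; linarith

lemma de_bound {n : ℕ} (x y z : Fin n → Bool) :
    |∑ i, dZ (x i) (y i) (z i)| + |∑ i, eZ (x i) (y i) (z i)| ≤ (n : ℤ) := by
  have h1 : |∑ i, dZ (x i) (y i) (z i)| ≤ ∑ i, |dZ (x i) (y i) (z i)| :=
    Finset.abs_sum_le_sum_abs _ _
  have h2 : |∑ i, eZ (x i) (y i) (z i)| ≤ ∑ i, |eZ (x i) (y i) (z i)| :=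
    Finset.abs_sum_le_sum_abs _ _
  have h3 : ∑ i, (|dZ (x i) (y i) (z i)| + |eZ (x i) (y i) (z i)|) ≤ ∑ _i : Fin n, (1 : ℤ) := by
    refine Finset.sum_le_sum fun i _ => ?_
    simp only [dZ, eZ]
    rcases x i <;> rcases y i <;> rcases z i <;> decide
  rw [Finset.sum_add_distrib] at h3
  simp only [Finset.sum_const, Finset.card_univ, Fintype.card_fin, nsmul_eq_mul, mul_one] at h3
  linarith

theorem stmt3 (n : ℕ) (hn : 1 ≤ n) (p q : ℝ) (hpq : (p, q) ∈ bacT)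
    (hunstable : ¬ nStable n (p, q)) :
    ∃ a b : ℕ, a ≤ b ∧ 1 ≤ b ∧ Nat.gcd a b = 1 ∧ a + b ≤ n ∧
      bacS p q = (a : ℝ) / (b : ℝ) := by
  obtain ⟨hp0, hpq', hsum, hne0⟩ := hpq
  simp only at hp0 hpq' hsum
  -- Case p = 0
  rcases eq_or_lt_of_le hp0 with hp | hp
  · exact ⟨0, 1, by norm_num, by norm_num, by norm_num, by omega, by simp [bacS, ← hp]⟩
  -- p > 0
  by_contra hcon
  push_neg at hcon
  apply hunstable
  have hq : 0 < q := lt_of_lt_of_le hp hpq'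
  have hq1 : q < 1 := by linarith
  have hp1 : p < 1 := by linarith
  set A := Real.log (1 - q) - Real.log p with hA
  set B := Real.log (1 - p) - Real.log q with hB
  have hApos : 0 < A := sub_pos.2 (Real.log_lt_log hp (by linarith))
  have hBpos : 0 < B := sub_pos.2 (Real.log_lt_log hq (by linarith))
  have hBA : B ≤ A := by
    have h1 : Real.log p + Real.log (1 - p) ≤ Real.log q + Real.log (1 - q) := by
      rw [← Real.log_mul hp.ne' (by linarith), ← Real.log_mul hq.ne' (by linarith)]
      exact Real.log_le_log (mul_pos hp (by linarith)) (by nlinarith)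
    simp only [hA, hB]; linarith
  -- Key: positive case of the rationality claim
  have keypos : ∀ d e : ℤ, 0 < e → |d| + |e| ≤ (n : ℤ) → (d : ℝ) * A = (e : ℝ) * B → False := by
    intro d e he hbnd heq
    have heR : (0 : ℝ) < (e : ℝ) := by exact_mod_cast he
    have hdR : (0 : ℝ) < (d : ℝ) := by
      by_contra hd
      push_neg at hd
      nlinarith
    have hd : 0 < d := by exact_mod_cast hdR
    have hde : d ≤ e := by
      have : (d : ℝ) * A ≤ (e : ℝ) * A := by nlinarith
      have : (d : ℝ) ≤ (e : ℝ) := le_of_mul_le_mul_right (by linarith) hApos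
      exact_mod_cast this
    set D := d.toNat with hD
    set E := e.toNat with hE
    have hDd : (D : ℤ) = d := Int.toNat_of_nonneg hd.le
    have hEe : (E : ℤ) = e := Int.toNat_of_nonneg he.le
    have hDpos : 0 < D := by omega
    have hEpos : 0 < E := by omega
    have hDE : D ≤ E := by omega
    have hDEn : D + E ≤ n := by
      rw [abs_of_pos hd, abs_of_pos he] at hbnd; omega
    set g := Nat.gcd D E with hg
    have hgpos : 0 < g := Nat.gcd_pos_of_pos_left _ hDpos
    refine hcon (D / g) (E / g) (Nat.div_le_div_right hDE)
      (Nat.div_pos (Nat.le_of_dvd hEpos (Nat.gcd_dvd_right D E)) hgpos)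
      (Nat.coprime_div_gcd_div_gcd hgpos)
      (le_trans (Nat.add_le_add (Nat.div_le_self _ _) (Nat.div_le_self _ _)) hDEn) ?_
    -- S = (D/g)/(E/g)
    have hcastD : ((D / g : ℕ) : ℝ) = (D : ℝ) / (g : ℝ) :=
      Nat.cast_div (Nat.gcd_dvd_left D E) (by positivity)
    have hcastE : ((E / g : ℕ) : ℝ) = (E : ℝ) / (g : ℝ) :=
      Nat.cast_div (Nat.gcd_dvd_right D E) (by positivity)
    rw [hcastD, hcastE]
    have hDR : ((D : ℕ) : ℝ) = (d : ℝ) := by exact_mod_cast congrArg (Int.cast : ℤ → ℝ) hDd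
    have hER : ((E : ℕ) : ℝ) = (e : ℝ) := by exact_mod_cast congrArg (Int.cast : ℤ → ℝ) hEe
    have hgR : (0 : ℝ) < (g : ℝ) := by positivity
    rw [hDR, hER]
    have hSdef : bacS p q = B / A := by simp [bacS, hp.ne', hA, hB]
    rw [hSdef]
    have hAne : A ≠ 0 := hApos.ne'
    have hene : (e : ℝ) ≠ 0 := heR.ne'
    have hgne : (g : ℝ) ≠ 0 := hgR.ne'
    have h1 : (d : ℝ) / (g : ℝ) / ((e : ℝ) / (g : ℝ)) = (d : ℝ) / (e : ℝ) := by
      field_simp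
    rw [h1, div_eq_div_iff hAne hene]
    linear_combination -heq
  have claim : ∀ d e : ℤ, (d, e) ≠ (0, 0) → |d| + |e| ≤ (n : ℤ) →
      (d : ℝ) * A - (e : ℝ) * B ≠ 0 := by
    intro d e hne hbnd h0
    have heq : (d : ℝ) * A = (e : ℝ) * B := by linarith
    rcases lt_trichotomy e 0 with he | he | he
    · refine keypos (-d) (-e) (by omega) (by simpa [abs_neg] using hbnd) ?_
      push_cast; linarith
    · subst he
      have : (d : ℝ) * A = 0 := by simpa using heq
      have : (d : ℝ) = 0 := by
        rcases mul_eq_zero.1 this with h | h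
        · exact h
        · exact absurd h hApos.ne'
      have : d = 0 := by exact_mod_cast this
      simp [this] at hne
    · exact keypos d e he hbnd heq
  -- Stability via continuity
  set g : ℤ × ℤ → ℝ × ℝ → ℝ := fun de r =>
    (de.1 : ℝ) * (Real.log (1 - r.2) - Real.log r.1)
      - (de.2 : ℝ) * (Real.log (1 - r.1) - Real.log r.2) with hgdef
  have hcont : ∀ de : ℤ × ℤ, ContinuousAt (g de) (p, q) := by
    intro de
    have h1 : ContinuousAt (fun r : ℝ × ℝ => Real.log r.1) (p, q) :=
      (Real.continuousAt_log hp.ne').comp (x := (p, q)) (f := Prod.fst) continuousAt_fst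
    have h2 : ContinuousAt (fun r : ℝ × ℝ => Real.log r.2) (p, q) :=
      (Real.continuousAt_log hq.ne').comp (x := (p, q)) (f := Prod.snd) continuousAt_snd
    have h3 : ContinuousAt (fun r : ℝ × ℝ => Real.log (1 - r.1)) (p, q) :=
      (Real.continuousAt_log (by norm_num; linarith)).comp (continuousAt_const.sub continuousAt_fst)
    have h4 : ContinuousAt (fun r : ℝ × ℝ => Real.log (1 - r.2)) (p, q) :=
      (Real.continuousAt_log (by norm_num; linarith)).comp (continuousAt_const.sub continuousAt_snd)
    exact ((continuousAt_const.mul (h4.sub h1)).sub (continuousAt_const.mul (h3.sub h2)))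
  set s : Set (ℤ × ℤ) :=
    {de | de ≠ (0, 0) ∧ |de.1| + |de.2| ≤ (n : ℤ)} with hs
  have hsfin : s.Finite := by
    apply Set.Finite.subset (Set.finite_Icc ((-(n : ℤ), -(n : ℤ))) ((n : ℤ), (n : ℤ)))
    rintro ⟨d, e⟩ ⟨-, hbnd⟩
    simp only [Set.mem_Icc, Prod.mk_le_mk]
    constructor <;> constructor <;>
      [skip; skip; skip; skip] <;>
      · have := abs_nonneg d; have := abs_nonneg e
        have hd := le_abs_self d; have hd' := neg_abs_le d
        have he := le_abs_self e; have he' := neg_abs_le e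
        linarith
  have hev : ∀ᶠ r : ℝ × ℝ in nhds (p, q),
      (0 < r.1) ∧ ∀ de ∈ s, (g de (p, q) ≤ 0 ↔ g de r ≤ 0) := by
    refine Filter.Eventually.and ?_ ?_
    · exact continuousAt_fst (Ioi_mem_nhds hp)
    · rw [Filter.eventually_all_finite hsfin]
      rintro ⟨d, e⟩ ⟨hne, hbnd⟩
      have hgne : g (d, e) (p, q) ≠ 0 := claim d e hne hbnd
      rcases hgne.lt_or_gt with hlt | hlt
      · have : ∀ᶠ r : ℝ × ℝ in nhds (p, q), g (d, e) r < 0 :=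
          (hcont (d, e)).eventually_lt_const hlt
        filter_upwards [this] with r hr
        constructor <;> intro <;> linarith
      · have : ∀ᶠ r : ℝ × ℝ in nhds (p, q), 0 < g (d, e) r :=
          (hcont (d, e)).eventually_const_lt hlt
        filter_upwards [this] with r hr
        constructor <;> intro <;> linarith
  rw [Metric.eventually_nhds_iff] at hev
  obtain ⟨ε, hε, hball⟩ := hev
  refine ⟨ε, hε, ?_⟩
  rintro ⟨p', q'⟩ ⟨hp0', hpq'', hsum', -⟩ hd
  have hd' : dist (p', q') (p, q) < ε := by rwa [dist_eq_norm]
  obtain ⟨hp'pos, hsign⟩ := hball hd'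
  simp only at hp'pos hpq'' hsum' ⊢
  have hq'pos : 0 < q' := lt_of_lt_of_le hp'pos hpq''
  intro x y z
  rw [bacPr_le_iff p q hp hq hsum x y z, bacPr_le_iff p' q' hp'pos hq'pos hsum' x y z]
  set d := ∑ i, dZ (x i) (y i) (z i) with hdd
  set e := ∑ i, eZ (x i) (y i) (z i) with hee
  by_cases hde : (d, e) = (0, 0)
  · have h1 : d = 0 := congrArg Prod.fst hde
    have h2 : e = 0 := congrArg Prod.snd hde
    simp [h1, h2]
  · have hmem : (d, e) ∈ s := ⟨hde, de_bound x y z⟩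
    exact hsign (d, e) hmem
end

section
/- For every order-connected subset I of the interval [0,1] (i.e., every interval I ⊆ [0,1]), the set S⁻¹(I) = {(p,q) ∈ T : S(p,q) ∈ I} is a preconnected subset of ℝ². -/
open Real Set

open Filter

noncomputable def Ff (p q : ℝ) : ℝ :=
  (Real.log (1 - p) - Real.log q) / (Real.log (1 - q) - Real.log p)


lemma bac_g {p q : ℝ} (hp : 0 < p) (hq : 0 < q) (hpq : p + q < 1) :
    p * (Real.log (1 - q) - Real.log p) < (1 - p) * (Real.log (1 - p) - Real.log q) := by
  have h1p : 0 < 1 - p := by linarith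
  have hq1p : q < 1 - p := by linarith
  set g : ℝ → ℝ := fun y => (1 - p) * (Real.log (1 - p) - Real.log y) - p * (Real.log (1 - y) - Real.log p) with hg
  have hder : ∀ y ∈ Icc q (1 - p), HasDerivAt g ((1 - p) * (-y⁻¹) - p * (-1 / (1 - y))) y := by
    intro y hy
    have hy0 : 0 < y := lt_of_lt_of_le hq hy.1
    have hy1 : 0 < 1 - y := by have := hy.2; linarith
    have hN : HasDerivAt (fun y : ℝ => Real.log (1 - p) - Real.log y) (-y⁻¹) y :=
      (Real.hasDerivAt_log hy0.ne').const_sub _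
    have hD0 : HasDerivAt (fun y : ℝ => Real.log (1 - y)) (-1 / (1 - y)) y :=
      (((hasDerivAt_id y).const_sub 1).log hy1.ne')
    exact (hN.const_mul _).sub ((hD0.sub_const _).const_mul p)
  have hanti : StrictAntiOn g (Icc q (1 - p)) := by
    apply strictAntiOn_of_deriv_neg (convex_Icc _ _)
    · exact fun y hy => (hder y hy).continuousAt.continuousWithinAt
    · intro y hy
      rw [interior_Icc] at hy
      have hy0 : 0 < y := lt_trans hq hy.1
      have hy1 : 0 < 1 - y := by have := hy.2; linarith
      rw [(hder y ⟨le_of_lt hy.1, le_of_lt hy.2⟩).deriv]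
      have h1 : p / (1 - y) < (1 - p) / y := by
        rw [div_lt_div_iff₀ hy1 hy0]
        nlinarith [hy.2]
      have : p * (1 / (1 - y)) < (1 - p) * y⁻¹ := by
        rw [one_div]; rw [div_eq_mul_inv] at h1
        calc p * (1 - y)⁻¹ = p / (1-y) := by rw [div_eq_mul_inv]
        _ < (1-p)/y := h1
        _ = (1-p) * y⁻¹ := by rw [div_eq_mul_inv]
      have hrw : (-1 : ℝ)/(1-y) = -(1/(1-y)) := by ring
      rw [hrw]
      linarith [this]
  have hlast : g (1 - p) = 0 := by
    have : (1 : ℝ) - (1 - p) = p := by ring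
    simp [hg, this, sub_self]
  have := hanti (left_mem_Icc.2 hq1p.le) (right_mem_Icc.2 hq1p.le) hq1p
  rw [hlast] at this
  simp only [hg] at this
  linarith




lemma Dpos {p q : ℝ} (hp : 0 < p) (hq1 : q < 1) (hpq : p + q < 1) :
    0 < Real.log (1 - q) - Real.log p :=
  sub_pos.2 (Real.log_lt_log hp (by linarith))

lemma Npos {p q : ℝ} (hp : 0 < p) (hq : 0 < q) (hpq : p + q < 1) :
    0 < Real.log (1 - p) - Real.log q :=
  sub_pos.2 (Real.log_lt_log hq (by linarith))

lemma Ff_pos {p q : ℝ} (hp : 0 < p) (hq : 0 < q) (hpq : p + q < 1) : 0 < Ff p q :=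
  div_pos (Npos hp hq hpq) (Dpos hp (by linarith) hpq)

lemma Ff_le_one {p q : ℝ} (hp : 0 < p) (hpq' : p ≤ q) (hpq : p + q < 1) : Ff p q ≤ 1 := by
  have hq : 0 < q := lt_of_lt_of_le hp hpq'
  rw [Ff, div_le_one (Dpos hp (by linarith) hpq)]
  have h1 : Real.log (1 - p) + Real.log p = Real.log ((1 - p) * p) :=
    (Real.log_mul (by linarith) hp.ne').symm
  have h2 : Real.log (1 - q) + Real.log q = Real.log ((1 - q) * q) :=
    (Real.log_mul (by linarith) hq.ne').symm
  have h3 : Real.log ((1 - p) * p) ≤ Real.log ((1 - q) * q) := by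
    apply Real.log_le_log (by nlinarith)
    nlinarith
  linarith

lemma Ff_diag {q : ℝ} (hq0 : 0 < q) (hq : q < 1/2) : Ff q q = 1 := by
  rw [Ff]
  exact div_self (Dpos hq0 (by linarith) (by linarith)).ne'

lemma Ff_hasDerivP {p q : ℝ} (hq0 : 0 < q) (hp0 : 0 < p) (hp1 : p < 1 - q) :
    HasDerivAt (fun p => Ff p q)
      (((-1 / (1 - p)) * (Real.log (1 - q) - Real.log p) -
        (Real.log (1 - p) - Real.log q) * (-p⁻¹)) / (Real.log (1 - q) - Real.log p) ^ 2) p := by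
  have h1p : 0 < 1 - p := by linarith
  have hN : HasDerivAt (fun p : ℝ => Real.log (1 - p) - Real.log q) (-1 / (1 - p)) p :=
    (((hasDerivAt_id p).const_sub 1).log h1p.ne').sub_const _
  have hD : HasDerivAt (fun p : ℝ => Real.log (1 - q) - Real.log p) (-p⁻¹) p :=
    (Real.hasDerivAt_log hp0.ne').const_sub _
  exact hN.div hD (Dpos hp0 (by linarith) (by linarith)).ne'

lemma Ff_strictMonoOn {q : ℝ} (hq0 : 0 < q) (hq1 : q < 1) :
    StrictMonoOn (fun p => Ff p q) (Ioo 0 (1 - q)) := by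
  apply strictMonoOn_of_deriv_pos (convex_Ioo _ _)
  · exact fun p hp => (Ff_hasDerivP hq0 hp.1 hp.2).continuousAt.continuousWithinAt
  · intro p hp
    rw [interior_Ioo] at hp
    obtain ⟨hp0, hp1⟩ := hp
    have h1p : 0 < 1 - p := by linarith
    rw [(Ff_hasDerivP hq0 hp0 hp1).deriv]
    set N := Real.log (1 - p) - Real.log q with hNdef
    set D := Real.log (1 - q) - Real.log p with hDdef
    have hD : 0 < D := Dpos hp0 hq1 (by linarith)
    apply div_pos _ (by positivity)
    have hkey : p * D < (1 - p) * N := bac_g hp0 hq0 (by linarith)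
    have h2 : D * (1 - p)⁻¹ < N * p⁻¹ := by
      rw [← div_eq_mul_inv, ← div_eq_mul_inv, div_lt_div_iff₀ h1p hp0]
      nlinarith
    have he : -1 / (1 - p) * D - N * -p⁻¹ = N * p⁻¹ - D * (1 - p)⁻¹ := by ring
    rw [he]; linarith

lemma Ff_strictAntiOn {p : ℝ} (hp0 : 0 < p) (hp1 : p < 1) :
    StrictAntiOn (fun q => Ff p q) (Ioo 0 (1 - p)) := by
  have hder : ∀ q ∈ Ioo (0:ℝ) (1 - p), HasDerivAt (fun q => Ff p q)
      (((-q⁻¹) * (Real.log (1 - q) - Real.log p) -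
        (Real.log (1 - p) - Real.log q) * (-1 / (1 - q))) / (Real.log (1 - q) - Real.log p) ^ 2) q := by
    intro q hq
    obtain ⟨hq0, hq1⟩ := hq
    have h1q : 0 < 1 - q := by linarith
    have hN : HasDerivAt (fun q : ℝ => Real.log (1 - p) - Real.log q) (-q⁻¹) q :=
      (Real.hasDerivAt_log hq0.ne').const_sub _
    have hD : HasDerivAt (fun q : ℝ => Real.log (1 - q) - Real.log p) (-1 / (1 - q)) q :=
      (((hasDerivAt_id q).const_sub 1).log h1q.ne').sub_const _
    exact hN.div hD (Dpos hp0 (by linarith) (by linarith)).ne'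
  apply strictAntiOn_of_deriv_neg (convex_Ioo _ _)
  · exact fun q hq => (hder q hq).continuousAt.continuousWithinAt
  · intro q hq
    rw [interior_Ioo] at hq
    obtain ⟨hq0, hq1⟩ := hq
    have h1q : 0 < 1 - q := by linarith
    rw [(hder q ⟨hq0, hq1⟩).deriv]
    set N := Real.log (1 - p) - Real.log q with hNdef
    set D := Real.log (1 - q) - Real.log p with hDdef
    have hD : 0 < D := Dpos hp0 (by linarith) (by linarith)
    apply div_neg_of_neg_of_pos _ (by positivity)
    have hkey : q * N < (1 - q) * D := bac_g hq0 hp0 (by linarith)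
    have h2 : N * (1 - q)⁻¹ < D * q⁻¹ := by
      rw [← div_eq_mul_inv, ← div_eq_mul_inv, div_lt_div_iff₀ h1q hq0]
      nlinarith
    have he : -q⁻¹ * D - N * (-1 / (1 - q)) = N * (1 - q)⁻¹ - D * q⁻¹ := by ring
    rw [he]; linarith

lemma Ff_contP {p q : ℝ} (hq0 : 0 < q) (hp0 : 0 < p) (hp1 : p < 1 - q) :
    ContinuousAt (fun p => Ff p q) p :=
  (Ff_hasDerivP hq0 hp0 hp1).continuousAt

lemma Ff_contQ {p q : ℝ} (hp0 : 0 < p) (hq0 : 0 < q) (hq1 : q < 1 - p) :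
    ContinuousAt (fun q => Ff p q) q := by
  have h1q : 0 < 1 - q := by linarith
  have hN : ContinuousAt (fun q : ℝ => Real.log (1 - p) - Real.log q) q :=
    continuousAt_const.sub (Real.continuousAt_log hq0.ne')
  have hD : ContinuousAt (fun q : ℝ => Real.log (1 - q) - Real.log p) q :=
    ((Real.continuousAt_log h1q.ne').comp ((continuous_const.sub continuous_id).continuousAt)).sub
      continuousAt_const
  exact hN.div hD (Dpos hp0 (by linarith) (by linarith)).ne'

lemma Ff_tendsto0 {q : ℝ} (hq0 : 0 < q) (hq1 : q < 1) :
    Tendsto (fun p => Ff p q) (nhdsWithin 0 (Ioi 0)) (nhds 0) := by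
  have hN : Tendsto (fun p : ℝ => Real.log (1 - p) - Real.log q) (nhdsWithin 0 (Ioi 0))
      (nhds (Real.log 1 - Real.log q)) := by
    apply tendsto_nhdsWithin_of_tendsto_nhds
    have c : ContinuousAt (fun p : ℝ => Real.log (1 - p) - Real.log q) 0 :=
      ((Real.continuousAt_log (by norm_num : (1:ℝ) - 0 ≠ 0)).comp
        ((continuous_const.sub continuous_id).continuousAt)).sub continuousAt_const
    simpa using c.tendsto
  have hlog : Tendsto Real.log (nhdsWithin 0 (Ioi 0)) atBot :=
    Real.tendsto_log_nhdsNE_zero.mono_left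
      (nhdsWithin_mono _ (fun x hx => by simpa using (ne_of_gt hx)))
  have hD : Tendsto (fun p : ℝ => Real.log (1 - q) - Real.log p) (nhdsWithin 0 (Ioi 0)) atTop := by
    have hneg : Tendsto (fun p : ℝ => -Real.log p) (nhdsWithin 0 (Ioi 0)) atTop :=
      tendsto_neg_atBot_atTop.comp hlog
    have := tendsto_atTop_add_const_left _ (Real.log (1 - q)) hneg
    simpa [sub_eq_add_neg] using this
  exact hN.div_atTop hD

lemma exists_hit {q p0 s : ℝ} (hq0 : 0 < q) (hq1 : q < 1) (hp00 : 0 < p0) (hp01 : p0 < 1 - q)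
    (hs0 : 0 < s) (hs : s ≤ Ff p0 q) : ∃ p, 0 < p ∧ p ≤ p0 ∧ Ff p q = s := by
  have ev1 : ∀ᶠ p in nhdsWithin 0 (Ioi 0), Ff p q < s :=
    (Ff_tendsto0 hq0 hq1).eventually_lt_const hs0
  have ev2 : ∀ᶠ p in nhdsWithin (0:ℝ) (Ioi 0), p < p0 :=
    eventually_nhdsWithin_of_eventually_nhds (Filter.Tendsto.eventually_lt_const hp00 tendsto_id)
  have ev3 : ∀ᶠ p in nhdsWithin (0:ℝ) (Ioi 0), 0 < p := eventually_mem_nhdsWithin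
  obtain ⟨p1, hp1s, hp1lt, hp10⟩ : ∃ p1 : ℝ, Ff p1 q < s ∧ p1 < p0 ∧ 0 < p1 :=
    (ev1.and (ev2.and ev3)).exists
  have hcont : ContinuousOn (fun p => Ff p q) (Icc p1 p0) := fun p hp =>
    (Ff_contP hq0 (lt_of_lt_of_le hp10 hp.1) (lt_of_le_of_lt hp.2 hp01)).continuousWithinAt
  have hsub := intermediate_value_Icc (le_of_lt hp1lt) hcont
  have hmem : s ∈ Icc (Ff p1 q) (Ff p0 q) := ⟨le_of_lt hp1s, hs⟩
  obtain ⟨p, hp, hfp⟩ := hsub hmem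
  exact ⟨p, lt_of_lt_of_le hp10 hp.1, hp.2, hfp⟩




lemma level_conn {s : ℝ} (hs0 : 0 < s) {P1 Q1 P2 Q2 : ℝ}
    (h1a : 0 < P1) (h1b : P1 ≤ Q1) (h1c : P1 + Q1 < 1)
    (h2a : 0 < P2) (h2b : P2 ≤ Q2) (h2c : P2 + Q2 < 1)
    (hQ : Q1 ≤ Q2) (hF1 : Ff P1 Q1 = s) (hF2 : Ff P2 Q2 = s) :
    ∃ C : Set (ℝ × ℝ), IsPreconnected C ∧ (P1, Q1) ∈ C ∧ (P2, Q2) ∈ C ∧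
      ∀ x ∈ C, 0 < x.1 ∧ x.1 ≤ x.2 ∧ x.1 + x.2 < 1 ∧ Ff x.1 x.2 = s := by
  have hQ1pos : 0 < Q1 := lt_of_lt_of_le h1a h1b
  have hQ2pos : 0 < Q2 := lt_of_lt_of_le h2a h2b
  have hQ11 : Q1 < 1 := by linarith
  have hQ21 : Q2 < 1 := by linarith
  -- existence of level point at each intermediate height
  have hex : ∀ q, Q1 ≤ q → q ≤ Q2 → ∃ p, 0 < p ∧ p ≤ q ∧ p + q < 1 ∧ Ff p q = s := by
    intro q hq1 hq2
    have hq0 : 0 < q := lt_of_lt_of_le hQ1pos hq1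
    have hq1' : q < 1 := lt_of_le_of_lt hq2 hQ21
    by_cases hc : P2 ≤ q
    · have hP2q : P2 + q < 1 := by linarith
      have hsle : s ≤ Ff P2 q := by
        rcases eq_or_lt_of_le hq2 with h | h
        · rw [h, hF2]
        · have := Ff_strictAntiOn h2a (by linarith)
            (show q ∈ Ioo (0:ℝ) (1 - P2) by constructor <;> linarith)
            (show Q2 ∈ Ioo (0:ℝ) (1 - P2) by constructor <;> linarith) h
          dsimp only at this
          rw [hF2] at this
          exact this.le
      obtain ⟨p, hp0, hple, hfp⟩ := exists_hit hq0 hq1' h2a (by linarith) hs0 hsle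
      exact ⟨p, hp0, hple.trans hc, by linarith, hfp⟩
    · push_neg at hc
      have h2q : q < 1 - q := by linarith
      have hdiag : Ff q q = 1 := Ff_diag hq0 (by linarith)
      have hs1 : s ≤ 1 := hF1 ▸ Ff_le_one h1a h1b h1c
      obtain ⟨p, hp0, hple, hfp⟩ := exists_hit hq0 hq1' hq0 h2q hs0 (hdiag ▸ hs1)
      exact ⟨p, hp0, hple, by linarith, hfp⟩
  -- choice function
  have hex' : ∀ q : ℝ, ∃ p : ℝ, Q1 ≤ q → q ≤ Q2 → 0 < p ∧ p ≤ q ∧ p + q < 1 ∧ Ff p q = s := by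
    intro q
    by_cases h : Q1 ≤ q ∧ q ≤ Q2
    · obtain ⟨p, hp⟩ := hex q h.1 h.2
      exact ⟨p, fun _ _ => hp⟩
    · exact ⟨1, fun ha hb => absurd ⟨ha, hb⟩ h⟩
  choose Pf hPf using hex'
  -- uniqueness at a given height
  have uniq : ∀ q, 0 < q → q < 1 → ∀ p p', 0 < p → p < 1 - q → 0 < p' → p' < 1 - q →
      Ff p q = Ff p' q → p = p' := by
    intro q hq0 hq1 p p' hp0 hp1 hp0' hp1' hfe
    exact (Ff_strictMonoOn hq0 hq1).injOn ⟨hp0, hp1⟩ ⟨hp0', hp1'⟩ hfe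
  have hPfQ1 : Pf Q1 = P1 := by
    obtain ⟨ha, hb, hc, hd⟩ := hPf Q1 le_rfl hQ
    exact uniq Q1 hQ1pos hQ11 _ _ ha (by linarith) h1a (by linarith) (by rw [hd, hF1])
  have hPfQ2 : Pf Q2 = P2 := by
    obtain ⟨ha, hb, hc, hd⟩ := hPf Q2 hQ le_rfl
    exact uniq Q2 hQ2pos hQ21 _ _ ha (by linarith) h2a (by linarith) (by rw [hd, hF2])
  -- continuity of Pf on Icc Q1 Q2
  have hcont : ContinuousOn Pf (Icc Q1 Q2) := by
    intro q0 hq0mem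
    obtain ⟨hp00, hp0le, hp0sum, hfp0⟩ := hPf q0 hq0mem.1 hq0mem.2
    have hq00 : 0 < q0 := lt_of_lt_of_le hQ1pos hq0mem.1
    have hq01 : q0 < 1 := lt_of_le_of_lt hq0mem.2 hQ21
    rw [Metric.continuousWithinAt_iff]
    intro ε hε
    set p0 := Pf q0 with hp0def
    set ε1 := min (ε / 2) (min (p0 / 2) ((1 - q0 - p0) / 2)) with hε1def
    have hε1pos : 0 < ε1 := by
      apply lt_min (by linarith) (lt_min (by linarith) (by linarith))
    have hε1a : ε1 ≤ ε / 2 := min_le_left _ _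
    have hε1b : ε1 ≤ p0 / 2 := le_trans (min_le_right _ _) (min_le_left _ _)
    have hε1c : ε1 ≤ (1 - q0 - p0) / 2 := le_trans (min_le_right _ _) (min_le_right _ _)
    set xlo := p0 - ε1 with hxlodef
    set xhi := p0 + ε1 with hxhidef
    have hxlo0 : 0 < xlo := by simp only [hxlodef]; linarith
    have hxhi1 : xhi < 1 - q0 := by simp only [hxhidef]; linarith
    have hmono := Ff_strictMonoOn hq00 hq01
    have hFlo : Ff xlo q0 < s := by
      have := hmono (show xlo ∈ Ioo (0:ℝ) (1 - q0) by constructor <;> [exact hxlo0; linarith])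
        (show p0 ∈ Ioo (0:ℝ) (1 - q0) by constructor <;> linarith) (by linarith)
      dsimp only at this
      rwa [hfp0] at this
    have hFhi : s < Ff xhi q0 := by
      have := hmono (show p0 ∈ Ioo (0:ℝ) (1 - q0) by constructor <;> linarith)
        (show xhi ∈ Ioo (0:ℝ) (1 - q0) by constructor <;> linarith) (by linarith)
      dsimp only at this
      rwa [hfp0] at this
    have hclo : ContinuousAt (fun q => Ff xlo q) q0 := Ff_contQ hxlo0 hq00 (by linarith)
    have hchi : ContinuousAt (fun q => Ff xhi q) q0 := Ff_contQ (by linarith) hq00 (by linarith)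
    have evA : ∀ᶠ q in nhds q0, Ff xlo q < s := hclo.tendsto.eventually_lt_const hFlo
    have evB : ∀ᶠ q in nhds q0, s < Ff xhi q := hchi.tendsto.eventually_const_lt hFhi
    have evC : ∀ᶠ q in nhds q0, q < 1 - xhi :=
      Filter.Tendsto.eventually_lt_const (by linarith) tendsto_id
    obtain ⟨δ, hδpos, hδ⟩ := Metric.eventually_nhds_iff.1 ((evA.and evB).and evC)
    refine ⟨δ, hδpos, fun q hqmem hqd => ?_⟩
    obtain ⟨⟨hA, hB⟩, hC⟩ := hδ hqd
    obtain ⟨hq0', hqle', hqsum', hfq'⟩ := hPf q hqmem.1 hqmem.2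
    have hq0pos : 0 < q := lt_of_lt_of_le hQ1pos hqmem.1
    have hq1' : q < 1 := lt_of_le_of_lt hqmem.2 hQ21
    have hmq := Ff_strictMonoOn hq0pos hq1'
    have hxlomem : xlo ∈ Ioo (0:ℝ) (1 - q) := ⟨hxlo0, by simp only [hxhidef] at hC; linarith⟩
    have hxhimem : xhi ∈ Ioo (0:ℝ) (1 - q) := ⟨by linarith, by linarith⟩
    have hPfqmem : Pf q ∈ Ioo (0:ℝ) (1 - q) := ⟨hq0', by linarith⟩
    have hlt1 : xlo < Pf q := by
      by_contra h
      push_neg at h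
      have := hmq.monotoneOn hPfqmem hxlomem h
      rw [hfq'] at this
      linarith
    have hlt2 : Pf q < xhi := by
      by_contra h
      push_neg at h
      have := hmq.monotoneOn hxhimem hPfqmem h
      rw [hfq'] at this
      linarith
    rw [Real.dist_eq, abs_lt]
    constructor <;> simp only [hxlodef, hxhidef] at hlt1 hlt2 <;> linarith
  refine ⟨(fun q => (Pf q, q)) '' Icc Q1 Q2, ?_, ?_, ?_, ?_⟩
  · exact isPreconnected_Icc.image _ (hcont.prodMk continuousOn_id)
  · exact ⟨Q1, left_mem_Icc.2 hQ, by simp [hPfQ1]⟩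
  · exact ⟨Q2, right_mem_Icc.2 hQ, by simp [hPfQ2]⟩
  · rintro x ⟨q, hqmem, rfl⟩
    exact hPf q hqmem.1 hqmem.2




lemma bacS_ne {p q : ℝ} (h : p ≠ 0) : bacS p q = Ff p q := if_neg h

lemma bacS_zero {q : ℝ} : bacS 0 q = 0 := if_pos rfl

lemma bacT_q_pos {x : ℝ × ℝ} (hx : x ∈ bacT) : 0 < x.2 := by
  obtain ⟨h0, h12, hsum, hne⟩ := hx
  rcases (h0.trans h12).lt_or_eq with h | h
  · exact h
  · exact absurd (Prod.ext (le_antisymm (h.symm ▸ h12) h0) h.symm) hne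

lemma ne00 {x : ℝ × ℝ} (h : 0 < x.2) : x ≠ (0, 0) := by
  intro he; rw [he] at h; exact lt_irrefl 0 h

lemma key (I : Set ℝ) (hI : I.OrdConnected) :
    ∀ a ∈ {pq : ℝ × ℝ | pq ∈ bacT ∧ bacS pq.1 pq.2 ∈ I},
    ∀ b ∈ {pq : ℝ × ℝ | pq ∈ bacT ∧ bacS pq.1 pq.2 ∈ I},
    bacS b.1 b.2 ≤ bacS a.1 a.2 →
    ∃ t ⊆ {pq : ℝ × ℝ | pq ∈ bacT ∧ bacS pq.1 pq.2 ∈ I},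
      a ∈ t ∧ b ∈ t ∧ IsPreconnected t := by
  intro a ha b hb hle
  set A := {pq : ℝ × ℝ | pq ∈ bacT ∧ bacS pq.1 pq.2 ∈ I} with hA
  obtain ⟨ha0, ha12, hasum, hane⟩ := ha.1
  obtain ⟨hb0', hb12, hbsum, hbne⟩ := hb.1
  have haq : 0 < a.2 := bacT_q_pos ha.1
  have hbq : 0 < b.2 := bacT_q_pos hb.1
  have haq1 : a.2 < 1 := by linarith
  by_cases hb0 : b.1 = 0
  · -- b lies on the p = 0 edge, and 0 ∈ I
    have hsb : bacS b.1 b.2 = 0 := by rw [hb0, bacS_zero]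
    have h0I : (0 : ℝ) ∈ I := hsb ▸ hb.2
    set E := (fun q : ℝ => ((0 : ℝ), q)) '' Ioo (0 : ℝ) 1 with hE
    set H := (fun p : ℝ => (p, a.2)) '' Icc (0 : ℝ) a.1 with hH
    have hEsub : E ⊆ A := by
      rintro _ ⟨q, ⟨hq0, hq1⟩, rfl⟩
      refine ⟨⟨le_rfl, hq0.le, by simpa using hq1, ne00 hq0⟩, ?_⟩
      simpa [bacS_zero] using h0I
    have hHsub : H ⊆ A := by
      rintro _ ⟨p, ⟨hp0, hp1⟩, rfl⟩
      refine ⟨⟨hp0, hp1.trans ha12, by simp; linarith, ne00 haq⟩, ?_⟩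
      by_cases hp : p = 0
      · simpa [hp, bacS_zero] using h0I
      · have hppos : 0 < p := lt_of_le_of_ne hp0 (Ne.symm hp)
        have hapos : 0 < a.1 := lt_of_lt_of_le hppos hp1
        have hmono := (Ff_strictMonoOn haq haq1).monotoneOn
          (show p ∈ Ioo (0:ℝ) (1 - a.2) from ⟨by linarith, by linarith⟩)
          (show a.1 ∈ Ioo (0:ℝ) (1 - a.2) from ⟨by linarith, by linarith⟩) hp1
        have hval : bacS p a.2 = Ff p a.2 := bacS_ne hp
        have hsa : bacS a.1 a.2 = Ff a.1 a.2 := bacS_ne hapos.ne'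
        simp only [hval]
        apply hI.out h0I ha.2
        refine ⟨(Ff_pos hppos haq (by linarith)).le, ?_⟩
        rw [hsa]
        exact hmono
    have hx0E : ((0 : ℝ), a.2) ∈ E := ⟨a.2, ⟨haq, haq1⟩, rfl⟩
    have hx0H : ((0 : ℝ), a.2) ∈ H := ⟨0, ⟨le_rfl, ha0⟩, rfl⟩
    have hEconn : IsPreconnected E :=
      isPreconnected_Ioo.image _ ((continuous_const.prodMk continuous_id).continuousOn)
    have hHconn : IsPreconnected H :=
      isPreconnected_Icc.image _ ((continuous_id.prodMk continuous_const).continuousOn)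
    refine ⟨E ∪ H, union_subset hEsub hHsub, ?_, ?_, IsPreconnected.union _ hx0E hx0H hEconn hHconn⟩
    · exact Or.inr ⟨a.1, ⟨ha0, le_rfl⟩, by simp⟩
    · exact Or.inl ⟨b.2, ⟨hbq, by linarith⟩, Prod.ext hb0.symm rfl⟩
  · -- both points have positive first coordinate
    have hbp : 0 < b.1 := lt_of_le_of_ne hb0' (Ne.symm hb0)
    have hsbF : bacS b.1 b.2 = Ff b.1 b.2 := bacS_ne hb0
    have hsbpos : 0 < Ff b.1 b.2 := Ff_pos hbp hbq hbsum
    have hsbI : Ff b.1 b.2 ∈ I := hsbF ▸ hb.2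
    have hap : 0 < a.1 := by
      rcases lt_or_eq_of_le ha0 with h | h
      · exact h
      · exfalso
        rw [← h] at hle
        rw [bacS_zero, hsbF] at hle
        exact absurd hle (not_le.2 hsbpos)
    have hsaF : bacS a.1 a.2 = Ff a.1 a.2 := bacS_ne hap.ne'
    have hsaI : Ff a.1 a.2 ∈ I := hsaF ▸ ha.2
    have hle' : Ff b.1 b.2 ≤ Ff a.1 a.2 := by rw [← hsbF, ← hsaF]; exact hle
    obtain ⟨p', hp'0, hp'le, hfp'⟩ :=
      exists_hit haq haq1 hap (by linarith) hsbpos hle'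
    set H := (fun p : ℝ => (p, a.2)) '' Icc p' a.1 with hH
    have hHsub : H ⊆ A := by
      rintro _ ⟨p, ⟨hp1, hp2⟩, rfl⟩
      have hppos : 0 < p := lt_of_lt_of_le hp'0 hp1
      refine ⟨⟨hppos.le, hp2.trans ha12, by simp; linarith, ne00 haq⟩, ?_⟩
      have hmem : ∀ r : ℝ, 0 < r → r ≤ a.1 → r ∈ Ioo (0:ℝ) (1 - a.2) := by
        intro r h1 h2; exact ⟨by linarith, by linarith⟩
      have hmono := (Ff_strictMonoOn haq haq1).monotoneOn
      have hlow := hmono (hmem p' hp'0 hp'le) (hmem p hppos (hp2)) hp1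
      have hhigh := hmono (hmem p hppos hp2) (hmem a.1 hap le_rfl) hp2
      simp only [bacS_ne hppos.ne']
      apply hI.out hsbI hsaI
      rw [← hfp'] at *
      exact ⟨hlow, hhigh⟩
    have hp'T : 0 < p' ∧ p' ≤ a.2 ∧ p' + a.2 < 1 :=
      ⟨hp'0, hp'le.trans ha12, by linarith⟩
    obtain ⟨C, hCconn, hC1, hC2, hCprop⟩ :
        ∃ C : Set (ℝ × ℝ), IsPreconnected C ∧ (p', a.2) ∈ C ∧ (b.1, b.2) ∈ C ∧
          ∀ x ∈ C, 0 < x.1 ∧ x.1 ≤ x.2 ∧ x.1 + x.2 < 1 ∧ Ff x.1 x.2 = Ff b.1 b.2 := by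
      rcases le_total a.2 b.2 with h | h
      · obtain ⟨C, h1, h2, h3, h4⟩ := level_conn hsbpos hp'T.1 hp'T.2.1 hp'T.2.2
          hbp hb12 hbsum h hfp' rfl
        exact ⟨C, h1, h2, h3, h4⟩
      · obtain ⟨C, h1, h2, h3, h4⟩ := level_conn hsbpos hbp hb12 hbsum
          hp'T.1 hp'T.2.1 hp'T.2.2 h rfl hfp'
        exact ⟨C, h1, h3, h2, h4⟩
    have hCsub : C ⊆ A := by
      intro x hx
      obtain ⟨hx1, hx2, hx3, hx4⟩ := hCprop x hx
      exact ⟨⟨hx1.le, hx2, hx3, ne00 (lt_of_lt_of_le hx1 hx2)⟩,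
        by rw [bacS_ne hx1.ne', hx4]; exact hsbI⟩
    refine ⟨H ∪ C, union_subset hHsub hCsub, ?_, ?_, ?_⟩
    · exact Or.inl ⟨a.1, ⟨hp'le, le_rfl⟩, by simp⟩
    · exact Or.inr (by simpa using hC2)
    · exact IsPreconnected.union (p', a.2) ⟨p', ⟨le_rfl, hp'le⟩, rfl⟩ hC1
        (isPreconnected_Icc.image _ ((continuous_id.prodMk continuous_const).continuousOn))
        hCconn

theorem stmt5 (I : Set ℝ) (hI : I.OrdConnected) (hI01 : I ⊆ Set.Icc (0 : ℝ) 1) :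
    IsPreconnected {pq : ℝ × ℝ | pq ∈ bacT ∧ bacS pq.1 pq.2 ∈ I} := by
  apply isPreconnected_of_forall_pair
  intro x hx y hy
  rcases le_total (bacS y.1 y.2) (bacS x.1 x.2) with h | h
  · obtain ⟨t, ht, hxt, hyt, hconn⟩ := key I hI x hx y hy h
    exact ⟨t, ht, hxt, hyt, hconn⟩
  · obtain ⟨t, ht, hyt, hxt, hconn⟩ := key I hI y hy x hx h
    exact ⟨t, ht, hxt, hyt, hconn⟩
end

section
/- For every τ ∈ (0,1), the function g_τ : [0, τ/2] → [0,1] defined by g_τ(p) = S(p, τ−p) is continuous, strictly increasing, satisfies g_τ(0) = 0 and g_τ(τ/2) = 1, and is a bijection from [0, τ/2] onto [0,1]. -/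
open Real Set

open Filter Topology in
theorem stmt6 (τ : ℝ) (hτ : τ ∈ Set.Ioo (0 : ℝ) 1) :
    ContinuousOn (fun p => bacS p (τ - p)) (Set.Icc 0 (τ / 2)) ∧
    StrictMonoOn (fun p => bacS p (τ - p)) (Set.Icc 0 (τ / 2)) ∧
    bacS 0 (τ - 0) = 0 ∧ bacS (τ / 2) (τ - τ / 2) = 1 ∧
    Set.BijOn (fun p => bacS p (τ - p)) (Set.Icc 0 (τ / 2)) (Set.Icc 0 1) := by
  obtain ⟨hτ0, hτ1⟩ := hτ
  set N : ℝ → ℝ := fun x => Real.log (1 - x) - Real.log (τ - x) with hN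
  have hNpos : ∀ x, 0 ≤ x → x < τ → 0 < N x := by
    intro x hx0 hxτ
    have h1 : 0 < τ - x := by linarith
    have h2 : τ - x < 1 - x := by linarith
    have := Real.log_lt_log h1 h2
    simp only [hN]; linarith
  have hNmono : ∀ x y, 0 ≤ x → x < y → y < τ → N x < N y := by
    intro x y hx0 hxy hyτ
    have h1 : 0 < τ - y := by linarith
    have h2 : 0 < τ - x := by linarith
    have h3 : 0 < 1 - y := by linarith
    have h4 : 0 < 1 - x := by linarith
    have key : (τ - y) * (1 - x) < (1 - y) * (τ - x) := by nlinarith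
    have := Real.log_lt_log (by positivity) key
    rw [Real.log_mul (by positivity) (by positivity),
      Real.log_mul (by positivity) (by positivity)] at this
    simp only [hN]; linarith
  have hgeq : ∀ p : ℝ, p ≠ 0 → bacS p (τ - p) = N p / N (τ - p) := by
    intro p hp
    have h : τ - (τ - p) = p := by ring
    simp only [bacS, if_neg hp, hN, h]
  have hg0 : bacS 0 (τ - 0) = 0 := by simp [bacS]
  have hghalf : bacS (τ / 2) (τ - τ / 2) = 1 := by
    have h2 : τ - τ / 2 = τ / 2 := by ring
    rw [hgeq _ (by positivity), h2, div_self (hNpos _ (by positivity) (by linarith)).ne']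
  set g : ℝ → ℝ := fun p => bacS p (τ - p) with hg
  -- strict monotonicity of g
  have hmono : StrictMonoOn g (Set.Icc 0 (τ / 2)) := by
    intro x hx y hy hxy
    simp only [mem_Icc] at hx hy
    have hyτ : y < τ := by linarith [hy.2]
    have hy0 : 0 < y := lt_of_le_of_lt hx.1 hxy
    have hNy : 0 < N y := hNpos y hy0.le hyτ
    have hNτy : 0 < N (τ - y) := hNpos _ (by linarith [hy.2]) (by linarith)
    rcases eq_or_lt_of_le hx.1 with h0 | h0
    · rw [hg]; simp only [← h0, hg0]
      rw [hgeq y hy0.ne']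
      positivity
    · have hNx : 0 < N x := hNpos x h0.le (by linarith)
      have hNτx : 0 < N (τ - x) := hNpos _ (by linarith) (by linarith)
      rw [hg]; simp only []
      rw [hgeq x h0.ne', hgeq y hy0.ne']
      rw [div_lt_div_iff₀ hNτx hNτy]
      have l1 : N x < N y := hNmono x y h0.le hxy hyτ
      have l2 : N (τ - y) < N (τ - x) := hNmono _ _ (by linarith) (by linarith) (by linarith)
      nlinarith
  -- continuity
  have hcont : ContinuousOn g (Set.Icc 0 (τ / 2)) := by
    intro p hp
    simp only [mem_Icc] at hp
    rcases eq_or_lt_of_le hp.1 with h0 | h0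
    · -- continuity at 0
      subst h0
      have hsub : 𝓝[Set.Icc 0 (τ/2) \ {0}] (0:ℝ) ≤ 𝓝[>] 0 := by
        apply nhdsWithin_mono
        rintro x ⟨⟨hx1, _⟩, hx2⟩
        exact lt_of_le_of_ne hx1 (Ne.symm hx2)
      have hnum : Tendsto N (𝓝[Set.Icc 0 (τ/2) \ {0}] (0:ℝ)) (𝓝 (N 0)) := by
        apply Tendsto.mono_left _ nhdsWithin_le_nhds
        have : ContinuousAt N 0 := by
          apply ContinuousAt.sub
          · exact ((continuousAt_const.sub continuousAt_id).log (by norm_num))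
          · exact ((continuousAt_const.sub continuousAt_id).log (by simp; linarith))
        exact this
      have hden : Tendsto (fun p => N (τ - p)) (𝓝[Set.Icc 0 (τ/2) \ {0}] (0:ℝ)) atTop := by
        have e : ∀ p : ℝ, N (τ - p) = Real.log (1 - (τ - p)) + (- Real.log (τ - (τ - p))) := by
          intro p; simp [hN]; ring
        simp only [e]
        apply Filter.Tendsto.add_atTop (C := Real.log (1 - (τ - 0)))
        · apply Tendsto.mono_left _ nhdsWithin_le_nhds
          exact ((continuousAt_const.sub (continuousAt_const.sub continuousAt_id)).log
            (by simp; linarith))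
        · have he : ∀ p : ℝ, τ - (τ - p) = p := fun p => by ring
          simp only [he]
          exact tendsto_neg_atBot_atTop.comp
            (Real.tendsto_log_nhdsGT_zero.mono_left hsub)
      have htend : Tendsto (fun p => N p / N (τ - p))
          (𝓝[Set.Icc 0 (τ/2) \ {0}] (0:ℝ)) (𝓝 0) :=
        Filter.Tendsto.div_atTop hnum hden
      have heq : Tendsto g (𝓝[Set.Icc 0 (τ/2) \ {0}] (0:ℝ)) (𝓝 0) := by
        apply htend.congr'
        filter_upwards [self_mem_nhdsWithin] with x hx
        exact (hgeq x hx.2).symm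
      have hcw : ContinuousWithinAt g (Set.Icc 0 (τ/2) \ {0}) 0 := by
        show Tendsto g _ (𝓝 (g 0))
        rw [show g 0 = 0 from hg0]
        exact heq
      exact continuousWithinAt_diff_singleton.mp hcw
    · -- continuity at p > 0
      apply ContinuousAt.continuousWithinAt
      have hev : g =ᶠ[𝓝 p] fun x => N x / N (τ - x) := by
        filter_upwards [eventually_ne_nhds h0.ne'] with x hx
        exact hgeq x hx
      rw [continuousAt_congr hev]
      have hp1 : p < 1 := by linarith [hp.2]
      have hpτ : p < τ := by linarith [hp.2]
      apply ContinuousAt.div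
      · apply ContinuousAt.sub
        · exact ((continuousAt_const.sub continuousAt_id).log (by intro h; simp only [Pi.sub_apply, id_eq] at h; linarith))
        · exact ((continuousAt_const.sub continuousAt_id).log (by intro h; simp only [Pi.sub_apply, id_eq] at h; linarith))
      · apply ContinuousAt.sub
        · exact ((continuousAt_const.sub (continuousAt_const.sub continuousAt_id)).log
            (by intro h; simp only [Pi.sub_apply, id_eq] at h; linarith))
        · exact ((continuousAt_const.sub (continuousAt_const.sub continuousAt_id)).log
            (by intro h; simp only [Pi.sub_apply, id_eq] at h; linarith))
      · exact (hNpos (τ - p) (by linarith [hp.2]) (by linarith)).ne'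
  refine ⟨hcont, hmono, hg0, hghalf, ?_⟩
  have h02 : (0:ℝ) ≤ τ / 2 := by positivity
  constructor
  · -- MapsTo
    intro x hx
    simp only [mem_Icc] at hx ⊢
    constructor
    · rcases eq_or_lt_of_le hx.1 with h0 | h0
      · rw [← h0]; exact le_of_eq hg0.symm
      · exact le_of_lt (by rw [← hg0]; exact hmono (by simp [h02]) (mem_Icc.mpr hx) h0)
    · rcases eq_or_lt_of_le hx.2 with h0 | h0
      · rw [h0]; exact le_of_eq hghalf
      · exact le_of_lt (by rw [← hghalf]; exact hmono (mem_Icc.mpr hx) (by simp [h02]) h0)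
  constructor
  · exact hmono.injOn
  · -- SurjOn
    have h := intermediate_value_Icc h02 hcont
    have e0 : g 0 = 0 := hg0
    have e1 : g (τ / 2) = 1 := hghalf
    rw [e0, e1] at h
    exact h
end

section
/- Let (p₀,q₀) and (p₁,q₁) be two points in T. If S(p₀,q₀) = S(p₁,q₁), then the channels BAC(p₀,q₀) and BAC(p₁,q₁) are n-equivalent for every n ≥ 1. -/
open Real Set

lemma bacT_facts {p q : ℝ} (h : (p, q) ∈ bacT) :
    0 ≤ p ∧ p ≤ q ∧ p + q < 1 ∧ 0 < q ∧ q < 1 ∧ p < 1 := by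
  obtain ⟨h1, h2, h3, h4⟩ := h
  simp only at h1 h2 h3
  have hq : 0 < q := by
    rcases lt_or_eq_of_le (le_trans h1 h2) with h | h
    · exact h
    · exfalso; apply h4; ext <;> simp <;> linarith
  exact ⟨h1, h2, h3, hq, by linarith, by linarith⟩

lemma bacPr_pos {p q : ℝ} (hp : 0 < p) (hp1 : p < 1) (hq : 0 < q) (hq1 : q < 1)
    {n : ℕ} (x y : Fin n → Bool) : 0 < bacPr p q x y := by
  apply Finset.prod_pos
  intro i _
  cases hx : x i <;> cases hy : y i <;> simp [hx, hy] <;> linarith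

lemma bacPr_log {p q : ℝ} (hp : 0 < p) (hp1 : p < 1) (hq : 0 < q) (hq1 : q < 1)
    {n : ℕ} (x y : Fin n → Bool) :
    Real.log (bacPr p q x y) =
      ∑ i, Real.log (if x i then (if y i then 1 - q else p) else (if y i then q else 1 - p)) := by
  apply Real.log_prod
  intro i _
  cases hx : x i <;> cases hy : y i <;> simp [hx, hy] <;> intro h <;> linarith

/-- Key criterion in the case `p > 0`. -/
lemma key_pos {p q : ℝ} (h : (p, q) ∈ bacT) (hp : 0 < p) {n : ℕ} (x y z : Fin n → Bool) :
    bacPr p q x y ≤ bacPr p q x z ↔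
      (∑ i, if x i then (0:ℝ) else ((if y i then 0 else 1) - (if z i then 0 else 1)))
          * bacS p q ≤
        ∑ i, if x i then ((if y i then (0:ℝ) else 1) - (if z i then 0 else 1)) else 0 := by
  obtain ⟨h1, h2, h3, hq, hq1, hp1⟩ := bacT_facts h
  set A := Real.log (1 - p) - Real.log q with hAdef
  set B := Real.log (1 - q) - Real.log p with hBdef
  have hA : 0 < A := sub_pos.mpr (Real.log_lt_log hq (by linarith))
  have hB : 0 < B := sub_pos.mpr (Real.log_lt_log hp (by linarith))
  have hS : bacS p q = A / B := by rw [bacS, if_neg (ne_of_gt hp)]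
  set U : ℝ := ∑ i, if x i then (0:ℝ) else ((if y i then 0 else 1) - (if z i then 0 else 1))
    with hU
  set V : ℝ := ∑ i, if x i then ((if y i then (0:ℝ) else 1) - (if z i then 0 else 1)) else 0
    with hV
  have hy : 0 < bacPr p q x y := bacPr_pos hp hp1 hq hq1 x y
  have hz : 0 < bacPr p q x z := bacPr_pos hp hp1 hq hq1 x z
  have hsum :
      Real.log (bacPr p q x y) - Real.log (bacPr p q x z) = U * A - V * B := by
    rw [bacPr_log hp hp1 hq hq1 x y, bacPr_log hp hp1 hq hq1 x z, hU, hV,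
      Finset.sum_mul, Finset.sum_mul, ← Finset.sum_sub_distrib, ← Finset.sum_sub_distrib]
    apply Finset.sum_congr rfl
    intro i _
    cases hx : x i <;> cases hy' : y i <;> cases hz' : z i <;> simp [hx, hy', hz'] <;> ring
  rw [← Real.log_le_log_iff hy hz, ← sub_nonpos, hsum, sub_nonpos, hS, ← mul_div_assoc,
    div_le_iff₀ hB]

lemma bacPr_zero_eq {q : ℝ} {n : ℕ} (x y : Fin n → Bool) (hP : ∀ i, x i = true → y i = true) :
    bacPr 0 q x y = (1 - q) ^ (∑ i, if x i then 1 else 0)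
      * q ^ (∑ i, if x i = false ∧ y i = true then 1 else 0) := by
  rw [← Finset.prod_pow_eq_pow_sum, ← Finset.prod_pow_eq_pow_sum, ← Finset.prod_mul_distrib]
  apply Finset.prod_congr rfl
  intro i _
  cases hx : x i <;> cases hy : y i <;> simp [hx, hy]
  exact absurd (hP i hx) (by simp [hy])

/-- Key criterion in the case `p = 0`. -/
lemma key_zero {q : ℝ} (hq : 0 < q) (hq1 : q < 1) {n : ℕ} (x y z : Fin n → Bool) :
    bacPr 0 q x y ≤ bacPr 0 q x z ↔
      ((∀ i, x i = true → y i = true) → (∀ i, x i = true → z i = true) ∧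
        (∑ i, if x i = false ∧ z i = true then 1 else 0) ≤
          ∑ i, if x i = false ∧ y i = true then 1 else 0) := by
  by_cases hP : ∀ i, x i = true → y i = true
  · by_cases hP' : ∀ i, x i = true → z i = true
    · rw [bacPr_zero_eq x y hP, bacPr_zero_eq x z hP']
      have hbase : (0:ℝ) < (1 - q) ^ (∑ i, if x i then 1 else 0) :=
        pow_pos (by linarith) _
      rw [mul_le_mul_iff_right₀ hbase]
      constructor
      · intro hle
        refine fun _ => ⟨hP', ?_⟩
        by_contra hlt
        push_neg at hlt
        exact absurd hle (not_le.mpr (pow_lt_pow_right_of_lt_one₀ hq hq1 hlt))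
      · intro hcon
        exact pow_le_pow_of_le_one (le_of_lt hq) (le_of_lt hq1) (hcon hP).2
    · push_neg at hP'
      obtain ⟨i, hxi, hzi⟩ := hP'
      have hzero : bacPr 0 q x z = 0 := by
        apply Finset.prod_eq_zero (Finset.mem_univ i)
        simp [hxi, Bool.eq_false_iff.mp (by simpa using hzi)]
      have hpos : 0 < bacPr 0 q x y := by
        apply Finset.prod_pos
        intro j _
        cases hx : x j
        · cases hy : y j <;> simp [hx, hy] <;> linarith
        · have := hP j hx
          simp [hx, this]; linarith
      rw [hzero]
      constructor
      · intro hle; linarith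
      · intro hcon
        obtain ⟨h', _⟩ := hcon hP
        exact absurd (h' i hxi) (by simpa using hzi)
  · have hzero : bacPr 0 q x y = 0 := by
      push_neg at hP
      obtain ⟨i, hxi, hyi⟩ := hP
      apply Finset.prod_eq_zero (Finset.mem_univ i)
      simp [hxi, Bool.eq_false_iff.mp (by simpa using hyi)]
    have hnn : 0 ≤ bacPr 0 q x z := by
      apply Finset.prod_nonneg
      intro j _
      cases hx : x j <;> cases hz : z j <;> simp [hx, hz] <;> linarith
    rw [hzero]
    simp [hP, hnn]

lemma bacS_pos {p q : ℝ} (h : (p, q) ∈ bacT) (hp : p ≠ 0) : 0 < bacS p q := by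
  obtain ⟨h1, h2, h3, hq, hq1, hp1⟩ := bacT_facts h
  have hp' : 0 < p := lt_of_le_of_ne h1 (Ne.symm hp)
  rw [bacS, if_neg hp]
  apply div_pos
  · exact sub_pos.mpr (Real.log_lt_log hq (by linarith))
  · exact sub_pos.mpr (Real.log_lt_log hp' (by linarith))

theorem stmt7 (p₀ q₀ p₁ q₁ : ℝ) (h₀ : (p₀, q₀) ∈ bacT) (h₁ : (p₁, q₁) ∈ bacT)
    (hS : bacS p₀ q₀ = bacS p₁ q₁) :
    ∀ n : ℕ, 1 ≤ n → nEquiv n p₀ q₀ p₁ q₁ := by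
  intro n _ x y z
  obtain ⟨hA1, hA2, hA3, hq₀, hq₀1, hp₀1⟩ := bacT_facts h₀
  obtain ⟨hB1, hB2, hB3, hq₁, hq₁1, hp₁1⟩ := bacT_facts h₁
  by_cases hp₀ : p₀ = 0
  · have hp₁ : p₁ = 0 := by
      by_contra hp₁
      have := bacS_pos h₁ hp₁
      rw [← hS, bacS, if_pos hp₀] at this
      exact lt_irrefl 0 this
    subst hp₀ hp₁
    rw [key_zero hq₀ hq₀1 x y z, key_zero hq₁ hq₁1 x y z]
  · have hp₁ : p₁ ≠ 0 := by
      by_contra hp₁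
      have := bacS_pos h₀ hp₀
      rw [hS, bacS, if_pos hp₁] at this
      exact lt_irrefl 0 this
    have hp₀' : 0 < p₀ := lt_of_le_of_ne hA1 (Ne.symm hp₀)
    have hp₁' : 0 < p₁ := lt_of_le_of_ne hB1 (Ne.symm hp₁)
    rw [key_pos h₀ hp₀' x y z, key_pos h₁ hp₁' x y z, hS]
end

section
/- Let n ≥ 2 and let (p₀,q₀), (p₁,q₁) ∈ T. The channels BAC(p₀,q₀) and BAC(p₁,q₁) are n-equivalent if and only if for every rational number r ∈ [0,1] whose reduced fraction a/b satisfies a + b ≤ n, one has both (S(p₀,q₀) ≤ r ⟺ S(p₁,q₁) ≤ r) and (S(p₀,q₀) < r ⟺ S(p₁,q₁) < r). In other words, the n-equivalence classes of T are exactly the level sets S⁻¹(r) for r ∈ D_n together with the open regions {(p,q) ∈ T : r_i < S(p,q) < r_{i+1}} between consecutive elements of D_n. -/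
open Real Set

section BacAux
open Finset

def bacCnt {n : ℕ} (x y : Fin n → Bool) (a b : Bool) : ℕ :=
  (Finset.univ.filter fun i => x i = a ∧ y i = b).card

lemma bacCnt_split {n : ℕ} (x y : Fin n → Bool) (a : Bool) :
    bacCnt x y a false + bacCnt x y a true =
      (Finset.univ.filter fun i => x i = a).card := by
  unfold bacCnt
  rw [← Finset.card_filter_add_card_filter_not (s := Finset.univ.filter fun i => x i = a)
    (p := fun i => y i = true), Finset.filter_filter, Finset.filter_filter, add_comm]
  congr 2
  ext i; rcases hy : y i <;> simp [hy]

lemma bacPr_eq (p q : ℝ) {n : ℕ} (x y : Fin n → Bool) :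
    bacPr p q x y = (1-q)^(bacCnt x y true true) * p^(bacCnt x y true false)
      * q^(bacCnt x y false true) * (1-p)^(bacCnt x y false false) := by
  unfold bacPr bacCnt
  rw [Finset.card_filter, Finset.card_filter, Finset.card_filter, Finset.card_filter,
    ← Finset.prod_pow_eq_pow_sum, ← Finset.prod_pow_eq_pow_sum,
    ← Finset.prod_pow_eq_pow_sum, ← Finset.prod_pow_eq_pow_sum,
    ← Finset.prod_mul_distrib, ← Finset.prod_mul_distrib, ← Finset.prod_mul_distrib]
  apply Finset.prod_congr rfl
  intro i _
  rcases hx : x i <;> rcases hy : y i <;> simp [hx, hy]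

lemma bacCnt_total {n : ℕ} (x y : Fin n → Bool) :
    (Finset.univ.filter fun i => x i = true).card
      + (Finset.univ.filter fun i => x i = false).card = n := by
  conv_rhs => rw [← Fintype.card_fin n, ← Finset.card_univ]
  rw [← Finset.card_filter_add_card_filter_not (s := (Finset.univ : Finset (Fin n)))
    (p := fun i => x i = true)]
  congr 2
  ext i; rcases hx : x i <;> simp [hx]

/-- comparison for `p > 0`. -/
lemma cmp_pos {p q : ℝ} (hp : 0 < p) (hq : 0 < q) (hp1 : p + q < 1)
    {A B C D A' B' C' D' : ℕ} (hAC : A + C = A' + C') (hBD : B + D = B' + D') :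
    (1-q)^D * p^B * q^C * (1-p)^A ≤ (1-q)^D' * p^B' * q^C' * (1-p)^A' ↔
    ((D:ℝ) - D') * (Real.log (1-q) - Real.log p)
      ≤ ((C:ℝ) - C') * (Real.log (1-p) - Real.log q) := by
  have h1q : (0:ℝ) < 1 - q := by linarith
  have h1p : (0:ℝ) < 1 - p := by linarith
  have pos : ∀ E F G H : ℕ, (0:ℝ) < (1-q)^E * p^F * q^G * (1-p)^H := fun E F G H => by
    positivity
  rw [← Real.log_le_log_iff (pos _ _ _ _) (pos _ _ _ _)]
  rw [Real.log_mul (by positivity) (by positivity), Real.log_mul (by positivity) (by positivity),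
    Real.log_mul (by positivity) (by positivity), Real.log_mul (by positivity) (by positivity),
    Real.log_mul (by positivity) (by positivity), Real.log_mul (by positivity) (by positivity),
    Real.log_pow, Real.log_pow, Real.log_pow, Real.log_pow,
    Real.log_pow, Real.log_pow, Real.log_pow, Real.log_pow]
  have e1 : (A:ℝ) + C = (A':ℝ) + C' := by exact_mod_cast congrArg (Nat.cast (R := ℝ)) hAC
  have e2 : (B:ℝ) + D = (B':ℝ) + D' := by exact_mod_cast congrArg (Nat.cast (R := ℝ)) hBD
  have hb : (B:ℝ)*Real.log p + (D:ℝ)*Real.log p = (B':ℝ)*Real.log p + (D':ℝ)*Real.log p := by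
    linear_combination (Real.log p) * e2
  have hd : (A:ℝ)*Real.log (1-p) + (C:ℝ)*Real.log (1-p)
      = (A':ℝ)*Real.log (1-p) + (C':ℝ)*Real.log (1-p) := by
    linear_combination (Real.log (1-p)) * e1
  constructor <;> intro h <;> linarith [h, hb, hd]

/-- comparison for `p = 0`. -/
lemma cmp_zero {q : ℝ} (hq : 0 < q) (hq1 : q < 1)
    {A B C D A' B' C' D' : ℕ} (hBD : B + D = B' + D') :
    (1-q)^D * (0:ℝ)^B * q^C * (1-(0:ℝ))^A ≤ (1-q)^D' * (0:ℝ)^B' * q^C' * (1-(0:ℝ))^A' ↔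
    (B = 0 → B' = 0 ∧ C' ≤ C) := by
  have h1q : (0:ℝ) < 1 - q := by linarith
  have val : ∀ E F G H : ℕ, (1-q)^E * (0:ℝ)^F * q^G * (1-(0:ℝ))^H
      = if F = 0 then (1-q)^E * q^G else 0 := by
    intro E F G H
    split
    · next h => simp [h]
    · next h => simp [zero_pow h]
  rw [val, val]
  rcases Nat.eq_zero_or_pos B with hB | hB
  · rcases Nat.eq_zero_or_pos B' with hB' | hB'
    · have hD : D = D' := by omega
      rw [if_pos hB, if_pos hB', hD,
        mul_le_mul_iff_of_pos_left (by positivity : (0:ℝ) < (1-q)^D')]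
      rw [StrictAnti.le_iff_ge (pow_right_strictAnti₀ hq hq1)]
      simp [hB, hB']
    · rw [if_pos hB, if_neg (by omega)]
      constructor
      · intro h; exfalso; nlinarith [pow_pos h1q D, pow_pos hq C]
      · intro h; exfalso; exact absurd (h hB).1 (by omega)
  · rw [if_neg (by omega)]
    constructor
    · intro _ h; omega
    · intro _
      split
      · positivity
      · exact le_refl 0

section Sfacts
variable {p q : ℝ} (hp : 0 < p) (hpq : p ≤ q) (hs : p + q < 1)
include hp hpq hs

lemma bL_pos : 0 < Real.log (1-q) - Real.log p :=
  sub_pos.2 (Real.log_lt_log hp (by linarith))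

lemma bM_pos : 0 < Real.log (1-p) - Real.log q :=
  sub_pos.2 (Real.log_lt_log (by linarith) (by linarith))

lemma bM_le_bL : Real.log (1-p) - Real.log q ≤ Real.log (1-q) - Real.log p := by
  have h1 : Real.log (p * (1-p)) ≤ Real.log (q * (1-q)) := by
    apply Real.log_le_log (by nlinarith)
    nlinarith
  rw [Real.log_mul (by positivity) (by nlinarith), Real.log_mul (by nlinarith) (by nlinarith)] at h1
  linarith

lemma bacS_aux_pos : 0 < bacS p q := by
  rw [bacS, if_neg (ne_of_gt hp)]
  exact div_pos (bM_pos hp hpq hs) (bL_pos hp hpq hs)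

lemma bacS_aux_le_one : bacS p q ≤ 1 := by
  rw [bacS, if_neg (ne_of_gt hp)]
  rw [div_le_one (bL_pos hp hpq hs)]
  exact bM_le_bL hp hpq hs

end Sfacts

lemma pr_le_iff_pos {p q : ℝ} (hp : 0 < p) (hpq : p ≤ q) (hs : p + q < 1)
    {n : ℕ} (x y z : Fin n → Bool) :
    bacPr p q x y ≤ bacPr p q x z ↔
      ((bacCnt x y true true : ℝ) - bacCnt x z true true) ≤
        ((bacCnt x y false true : ℝ) - bacCnt x z false true) * bacS p q := by
  rw [bacPr_eq, bacPr_eq,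
    cmp_pos hp (by linarith) hs (by rw [bacCnt_split, bacCnt_split]) (by rw [bacCnt_split, bacCnt_split])]
  rw [bacS, if_neg (ne_of_gt hp), mul_div_assoc']
  rw [le_div_iff₀ (bL_pos hp hpq hs)]

lemma pr_le_iff_zero {q : ℝ} (hq : 0 < q) (hq1 : q < 1) {n : ℕ} (x y z : Fin n → Bool) :
    bacPr 0 q x y ≤ bacPr 0 q x z ↔
      (bacCnt x y true false = 0 →
        bacCnt x z true false = 0 ∧ bacCnt x z false true ≤ bacCnt x y false true) := by
  rw [bacPr_eq, bacPr_eq, cmp_zero hq hq1 (by rw [bacCnt_split, bacCnt_split])]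

lemma rat_num_den_bound (d c : ℤ) (hd : d ≠ 0) (hc : c ≠ 0) :
    ((d:ℚ)/c).num.natAbs ≤ d.natAbs ∧ ((d:ℚ)/c).den ≤ c.natAbs := by
  have hdc : (d:ℚ)/c = Rat.divInt d c := (Rat.divInt_eq_div d c).symm
  constructor
  · have h := Rat.num_dvd d hc
    rw [← hdc] at h
    have : ((d:ℚ)/c).num ≠ 0 ∨ True := Or.inr trivial
    exact Nat.le_of_dvd (Int.natAbs_pos.2 hd) (Int.natAbs_dvd_natAbs.2 h)
  · have h := Rat.den_dvd d c
    rw [← hdc] at h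
    have h2 : (((d:ℚ)/c).den : ℤ).natAbs ∣ c.natAbs := Int.natAbs_dvd_natAbs.2 h
    simp only [Int.natAbs_natCast] at h2
    exact Nat.le_of_dvd (Int.natAbs_pos.2 hc) h2

lemma key_arith {n : ℕ} {S₀ S₁ : ℝ}
    (h0 : 0 < S₀) (h1 : S₀ ≤ 1) (h0' : 0 < S₁) (h1' : S₁ ≤ 1)
    (H : ∀ r : ℚ, 0 ≤ r → r ≤ 1 → r.num.natAbs + r.den ≤ n →
      ((S₀ ≤ (r:ℝ) ↔ S₁ ≤ (r:ℝ)) ∧ (S₀ < (r:ℝ) ↔ S₁ < (r:ℝ))))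
    (d c : ℤ) (hdc : d.natAbs + c.natAbs ≤ n) :
    ((d:ℝ) ≤ (c:ℝ) * S₀ ↔ (d:ℝ) ≤ (c:ℝ) * S₁) := by
  rcases lt_trichotomy c 0 with hc | hc | hc
  · have hcR : (c:ℝ) < 0 := by exact_mod_cast hc
    rcases lt_trichotomy d 0 with hd | hd | hd
    · -- d < 0, c < 0
      have hdR : (d:ℝ) < 0 := by exact_mod_cast hd
      rcases lt_or_ge d c with hdc2 | hdc2
      · -- d < c : r > 1, both true
        have hR : (d:ℝ) < c := by exact_mod_cast hdc2
        constructor <;> intro _ <;> nlinarith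
      · -- c ≤ d < 0 : r ∈ (0,1]
        set r : ℚ := (d:ℚ)/c with hr
        have hrR : (r:ℝ) = (d:ℝ)/(c:ℝ) := by push_cast [hr]; ring
        have hr0 : 0 ≤ r := by
          rw [hr]
          exact le_of_lt (div_pos_of_neg_of_neg (by exact_mod_cast hd) (by exact_mod_cast hc))
        have hr1 : r ≤ 1 := by
          rw [hr, div_le_iff_of_neg (by exact_mod_cast hc : ((c:ℚ)) < 0)]
          rw [one_mul]
          exact_mod_cast hdc2
        obtain ⟨hb1, hb2⟩ := rat_num_den_bound d c (by omega) (by omega)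
        rw [← hr] at hb1 hb2
        have Hr := (H r hr0 hr1 (by omega)).1
        rw [hrR] at Hr
        have e : ∀ S : ℝ, ((d:ℝ) ≤ (c:ℝ) * S ↔ S ≤ (d:ℝ)/(c:ℝ)) := by
          intro S
          rw [le_div_iff_of_neg hcR]
          constructor <;> intro h <;> nlinarith
        rw [e, e]; exact Hr
    · subst hd
      push_cast
      have h₀ : ¬ ((0:ℝ) ≤ (c:ℝ) * S₀) := not_le.2 (mul_neg_of_neg_of_pos hcR h0)
      have h₁ : ¬ ((0:ℝ) ≤ (c:ℝ) * S₁) := not_le.2 (mul_neg_of_neg_of_pos hcR h0')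
      constructor <;> intro h <;> [exact absurd h h₀; exact absurd h h₁]
    · have hdR : (0:ℝ) < d := by exact_mod_cast hd
      constructor <;> intro h <;> nlinarith
  · subst hc; simp
  · have hcR : (0:ℝ) < (c:ℝ) := by exact_mod_cast hc
    rcases lt_trichotomy d 0 with hd | hd | hd
    · have hdR : (d:ℝ) < 0 := by exact_mod_cast hd
      constructor <;> intro h <;> nlinarith
    · subst hd
      push_cast
      constructor <;> intro _h <;> nlinarith [mul_pos hcR h0, mul_pos hcR h0']
    · rcases lt_or_ge c d with hdc2 | hdc2
      · have hR : (c:ℝ) < d := by exact_mod_cast hdc2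
        constructor <;> intro h <;> nlinarith
      · -- 0 < d ≤ c : r ∈ (0,1]
        set r : ℚ := (d:ℚ)/c with hr
        have hrR : (r:ℝ) = (d:ℝ)/(c:ℝ) := by push_cast [hr]; ring
        have hr0 : 0 ≤ r := by
          rw [hr]; positivity
        have hr1 : r ≤ 1 := by
          rw [hr, div_le_one (by exact_mod_cast hc)]
          exact_mod_cast hdc2
        obtain ⟨hb1, hb2⟩ := rat_num_den_bound d c (by omega) (by omega)
        rw [← hr] at hb1 hb2
        have Hr := (H r hr0 hr1 (by omega)).2
        rw [hrR] at Hr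
        have e : ∀ S : ℝ, ((d:ℝ) ≤ (c:ℝ) * S ↔ ¬ (S < (d:ℝ)/(c:ℝ))) := by
          intro S
          rw [not_lt, div_le_iff₀ hcR]
          constructor <;> intro h <;> nlinarith
        rw [e, e, Hr]

lemma card_lt_fin (n a : ℕ) (h : a ≤ n) :
    (Finset.univ.filter fun i : Fin n => (i:ℕ) < a).card = a := by
  rcases Nat.eq_or_lt_of_le h with h' | h'
  · subst h'
    rw [Finset.filter_true_of_mem (fun i _ => i.2)]
    simp
  · have : (Finset.univ.filter fun i : Fin n => (i:ℕ) < a) = Finset.Iio ⟨a, h'⟩ := by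
      ext i
      simp [Fin.lt_def]
    rw [this, Fin.card_Iio]

lemma card_between_fin (n a b : ℕ) (h : a + b ≤ n) :
    (Finset.univ.filter fun i : Fin n => ¬((i:ℕ) < a) ∧ (i:ℕ) < a + b).card = b := by
  have key : ∀ m ≤ n, (Finset.univ.filter fun i : Fin n => (i:ℕ) < m).card = m :=
    fun m hm => card_lt_fin n m hm
  have split : (Finset.univ.filter fun i : Fin n => (i:ℕ) < a).card
      + (Finset.univ.filter fun i : Fin n => ¬((i:ℕ) < a) ∧ (i:ℕ) < a + b).card
      = (Finset.univ.filter fun i : Fin n => (i:ℕ) < a + b).card := by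
    rw [← Finset.card_filter_add_card_filter_not
      (s := Finset.univ.filter fun i : Fin n => (i:ℕ) < a + b) (p := fun i => (i:ℕ) < a),
      Finset.filter_filter, Finset.filter_filter]
    congr 2
    · ext i; simp only [Finset.mem_filter, Finset.mem_univ, true_and]; omega
    · ext i; simp only [Finset.mem_filter, Finset.mem_univ, true_and]; omega
  rw [key a (by omega), key (a+b) h] at split
  omega

lemma filter_card_congr' {n : ℕ} (P Q : Fin n → Prop) [DecidablePred P] [DecidablePred Q]
    (h : ∀ i, P i ↔ Q i) :
    (Finset.univ.filter P).card = (Finset.univ.filter Q).card := by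
  congr 1
  ext i
  simp [h i]

section Witness
variable {n a b : ℕ}

/-- counts for the main witness -/
lemma witness_counts (ha : 1 ≤ b) (hab : a + b ≤ n) :
    bacCnt (fun i : Fin n => decide ((i:ℕ) < a)) (fun i => decide ((i:ℕ) < a + b)) true true = a ∧
    bacCnt (fun i : Fin n => decide ((i:ℕ) < a)) (fun i => decide ((i:ℕ) < a + b)) true false = 0 ∧
    bacCnt (fun i : Fin n => decide ((i:ℕ) < a)) (fun i => decide ((i:ℕ) < a + b)) false true = b ∧
    bacCnt (fun i : Fin n => decide ((i:ℕ) < a)) (fun i : Fin n => false) true true = 0 ∧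
    bacCnt (fun i : Fin n => decide ((i:ℕ) < a)) (fun i : Fin n => false) true false = a ∧
    bacCnt (fun i : Fin n => decide ((i:ℕ) < a)) (fun i : Fin n => false) false true = 0 := by
  unfold bacCnt
  refine ⟨?_, ?_, ?_, ?_, ?_, ?_⟩
  · rw [filter_card_congr' _ (fun i => (i:ℕ) < a) (by intro i; simp; omega)]
    exact card_lt_fin n a (by omega)
  · rw [filter_card_congr' _ (fun _ => False) (by intro i; simp; omega)]
    simp
  · rw [filter_card_congr' _ (fun i => ¬((i:ℕ) < a) ∧ (i:ℕ) < a + b) (by intro i; simp)]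
    exact card_between_fin n a b hab
  · rw [filter_card_congr' _ (fun _ => False) (by intro i; simp)]
    simp
  · rw [filter_card_congr' _ (fun i => (i:ℕ) < a) (by intro i; simp)]
    exact card_lt_fin n a (by omega)
  · rw [filter_card_congr' _ (fun _ => False) (by intro i; simp)]
    simp

end Witness

lemma witness_main {p q : ℝ} (hp0 : 0 ≤ p) (hpq : p ≤ q) (hs : p + q < 1) (hq : 0 < q)
    {n a b : ℕ} (ha : 1 ≤ a) (hb : 1 ≤ b) (hab : a + b ≤ n) :
    (bacPr p q (fun i : Fin n => decide ((i:ℕ) < a)) (fun i => decide ((i:ℕ) < a + b))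
        ≤ bacPr p q (fun i : Fin n => decide ((i:ℕ) < a)) (fun _ => false)
      ↔ (a:ℝ)/(b:ℝ) ≤ bacS p q) ∧
    (bacPr p q (fun i : Fin n => decide ((i:ℕ) < a)) (fun _ => false)
        ≤ bacPr p q (fun i : Fin n => decide ((i:ℕ) < a)) (fun i => decide ((i:ℕ) < a + b))
      ↔ bacS p q ≤ (a:ℝ)/(b:ℝ)) := by
  obtain ⟨c1, c2, c3, c4, c5, c6⟩ := witness_counts (a := a) (b := b) (n := n) hb hab
  have hbR : (0:ℝ) < b := by exact_mod_cast hb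
  have haR : (0:ℝ) < a := by exact_mod_cast ha
  rcases eq_or_lt_of_le hp0 with hp | hp
  · -- p = 0
    subst hp
    have hq1 : q < 1 := by linarith
    rw [pr_le_iff_zero hq hq1, pr_le_iff_zero hq hq1, c2, c3, c5, c6]
    have hS : bacS 0 q = 0 := by rw [bacS, if_pos rfl]
    rw [hS]
    constructor
    · constructor
      · intro h
        exact absurd (h rfl).1 (by omega)
      · intro h
        exfalso
        have : (0:ℝ) < (a:ℝ)/b := by positivity
        linarith
    · constructor
      · intro _
        positivity
      · intro _ h
        omega
  · -- p > 0
    rw [pr_le_iff_pos hp hpq hs, pr_le_iff_pos hp hpq hs, c1, c3, c4, c6]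
    constructor
    · rw [div_le_iff₀ hbR]
      push_cast
      constructor <;> intro h <;> nlinarith
    · rw [le_div_iff₀ hbR]
      push_cast
      constructor <;> intro h <;> nlinarith

lemma witness_zero {p q : ℝ} (hp0 : 0 ≤ p) (hpq : p ≤ q) (hs : p + q < 1) (hq : 0 < q)
    {n : ℕ} (hn : 2 ≤ n) :
    (bacPr p q (fun i : Fin n => decide ((i:ℕ) < 2)) (fun i => decide ((i:ℕ) < 1))
        ≤ bacPr p q (fun i : Fin n => decide ((i:ℕ) < 2)) (fun _ => false)
      ↔ bacS p q ≤ 0) := by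
  have c2 : bacCnt (fun i : Fin n => decide ((i:ℕ) < 2)) (fun i => decide ((i:ℕ) < 1))
      true false = 1 := by
    unfold bacCnt
    rw [filter_card_congr' _ (fun i => ¬((i:ℕ) < 1) ∧ (i:ℕ) < 1 + 1) (by intro i; simp; omega)]
    exact card_between_fin n 1 1 hn
  have c1 : bacCnt (fun i : Fin n => decide ((i:ℕ) < 2)) (fun i => decide ((i:ℕ) < 1))
      true true = 1 := by
    unfold bacCnt
    rw [filter_card_congr' _ (fun i => (i:ℕ) < 1) (by intro i; simp; omega)]
    exact card_lt_fin n 1 (by omega)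
  have c3 : bacCnt (fun i : Fin n => decide ((i:ℕ) < 2)) (fun i => decide ((i:ℕ) < 1))
      false true = 0 := by
    unfold bacCnt
    rw [filter_card_congr' _ (fun _ => False) (by intro i; simp; omega)]
    simp
  have c4 : bacCnt (fun i : Fin n => decide ((i:ℕ) < 2)) (fun _ : Fin n => false)
      true true = 0 := by
    unfold bacCnt
    rw [filter_card_congr' _ (fun _ => False) (by intro i; simp)]
    simp
  have c6 : bacCnt (fun i : Fin n => decide ((i:ℕ) < 2)) (fun _ : Fin n => false)
      false true = 0 := by
    unfold bacCnt
    rw [filter_card_congr' _ (fun _ => False) (by intro i; simp)]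
    simp
  rcases eq_or_lt_of_le hp0 with hp | hp
  · subst hp
    have hq1 : q < 1 := by linarith
    rw [pr_le_iff_zero hq hq1, c2]
    have hS : bacS 0 q = 0 := by rw [bacS, if_pos rfl]
    rw [hS]
    constructor
    · intro _; exact le_refl _
    · intro _ h; omega
  · rw [pr_le_iff_pos hp hpq hs, c1, c3, c4, c6]
    have hS := bacS_aux_pos hp hpq hs
    constructor
    · intro h; exfalso; norm_num at h
    · intro h; exfalso; linarith

lemma bacS_aux_nonneg {p q : ℝ} (hp0 : 0 ≤ p) (hpq : p ≤ q) (hs : p + q < 1) :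
    0 ≤ bacS p q := by
  rcases eq_or_lt_of_le hp0 with hp | hp
  · rw [bacS, if_pos hp.symm]
  · exact le_of_lt (bacS_aux_pos hp hpq hs)


end BacAux

theorem stmt8 (n : ℕ) (hn : 2 ≤ n) (p₀ q₀ p₁ q₁ : ℝ)
    (h₀ : (p₀, q₀) ∈ bacT) (h₁ : (p₁, q₁) ∈ bacT) :
    nEquiv n p₀ q₀ p₁ q₁ ↔
      ∀ r : ℚ, 0 ≤ r → r ≤ 1 → r.num.natAbs + r.den ≤ n →
        ((bacS p₀ q₀ ≤ (r : ℝ) ↔ bacS p₁ q₁ ≤ (r : ℝ)) ∧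
         (bacS p₀ q₀ < (r : ℝ) ↔ bacS p₁ q₁ < (r : ℝ))) := by
  obtain ⟨hp₀, hpq₀, hs₀, hne₀⟩ := h₀
  obtain ⟨hp₁, hpq₁, hs₁, hne₁⟩ := h₁
  simp only at hp₀ hpq₀ hs₀ hp₁ hpq₁ hs₁
  have hq₀ : 0 < q₀ := by
    rcases eq_or_lt_of_le (le_trans hp₀ hpq₀) with h | h
    · exfalso; apply hne₀
      have : p₀ = 0 := le_antisymm (hpq₀.trans h.symm.le) hp₀
      simp [this, h.symm, Prod.ext_iff]
    · exact h
  have hq₁ : 0 < q₁ := by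
    rcases eq_or_lt_of_le (le_trans hp₁ hpq₁) with h | h
    · exfalso; apply hne₁
      have : p₁ = 0 := le_antisymm (hpq₁.trans h.symm.le) hp₁
      simp [this, h.symm, Prod.ext_iff]
    · exact h
  constructor
  · -- forward
    intro hE r hr0 hr1 hrn
    rcases Nat.eq_zero_or_pos r.num.natAbs with ha | ha
    · -- r = 0
      have hr : r = 0 := by
        rw [← Rat.num_eq_zero]
        exact Int.natAbs_eq_zero.1 ha
      subst hr
      have hcast : ((0:ℚ):ℝ) = 0 := by norm_num
      rw [hcast]
      have w0 := witness_zero hp₀ hpq₀ hs₀ hq₀ (n := n) hn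
      have w1 := witness_zero hp₁ hpq₁ hs₁ hq₁ (n := n) hn
      have hEw := hE (fun i : Fin n => decide ((i:ℕ) < 2)) (fun i => decide ((i:ℕ) < 1))
        (fun _ => false)
      rw [w0, w1] at hEw
      refine ⟨hEw, ?_⟩
      have n0 := bacS_aux_nonneg hp₀ hpq₀ hs₀
      have n1 := bacS_aux_nonneg hp₁ hpq₁ hs₁
      constructor <;> intro h <;> linarith
    · -- r > 0
      set a := r.num.natAbs with hadef
      set b := r.den with hbdef
      have hb : 1 ≤ b := r.pos
      have hab : a + b ≤ n := hrn
      have hcast : (r:ℝ) = (a:ℝ)/(b:ℝ) := by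
        rw [Rat.cast_def]
        congr 1
        · have h' : (0:ℤ) ≤ r.num := Rat.num_nonneg.2 hr0
          rw [hadef]
          push_cast [Nat.cast_natAbs]
          rw [abs_of_nonneg (by exact_mod_cast h' : (0:ℝ) ≤ (r.num:ℝ))]
      have w0 := witness_main hp₀ hpq₀ hs₀ hq₀ (n := n) ha hb hab
      have w1 := witness_main hp₁ hpq₁ hs₁ hq₁ (n := n) ha hb hab
      have hEw1 := hE (fun i : Fin n => decide ((i:ℕ) < a)) (fun i => decide ((i:ℕ) < a + b))
        (fun _ => false)
      have hEw2 := hE (fun i : Fin n => decide ((i:ℕ) < a)) (fun _ => false)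
        (fun i => decide ((i:ℕ) < a + b))
      rw [w0.1, w1.1] at hEw1
      rw [w0.2, w1.2] at hEw2
      rw [hcast]
      refine ⟨hEw2, ?_⟩
      rw [← not_le, ← not_le, hEw1]
  · -- backward
    intro H x y z
    rcases eq_or_lt_of_le hp₀ with hp0 | hp0 <;> rcases eq_or_lt_of_le hp₁ with hp1 | hp1
    · -- both zero
      rw [← hp0, ← hp1]
      rw [pr_le_iff_zero hq₀ (by linarith), pr_le_iff_zero hq₁ (by linarith)]
    · -- p₀ = 0, p₁ > 0 : contradiction
      exfalso
      have H0 := (H 0 (le_refl 0) (by norm_num) (by simp; omega)).1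
      have hS0 : bacS p₀ q₀ = 0 := by rw [bacS, if_pos hp0.symm]
      have hS1 := bacS_aux_pos hp1 hpq₁ hs₁
      rw [hS0] at H0
      simp only [Rat.cast_zero] at H0
      have := H0.1 (le_refl 0)
      linarith
    · exfalso
      have H0 := (H 0 (le_refl 0) (by norm_num) (by simp; omega)).1
      have hS1 : bacS p₁ q₁ = 0 := by rw [bacS, if_pos hp1.symm]
      have hS0 := bacS_aux_pos hp0 hpq₀ hs₀
      rw [hS1] at H0
      simp only [Rat.cast_zero] at H0
      have := H0.2 (le_refl 0)
      linarith
    · -- both positive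
      rw [pr_le_iff_pos hp0 hpq₀ hs₀, pr_le_iff_pos hp1 hpq₁ hs₁]
      set D := bacCnt x y true true
      set D' := bacCnt x z true true
      set C := bacCnt x y false true
      set C' := bacCnt x z false true
      have e1 := bacCnt_split x y true
      have e2 := bacCnt_split x z true
      have e3 := bacCnt_split x y false
      have e4 := bacCnt_split x z false
      have etot := bacCnt_total x y
      have hdc : ((D:ℤ) - D').natAbs + ((C:ℤ) - C').natAbs ≤ n := by omega
      have hkey := key_arith (bacS_aux_pos hp0 hpq₀ hs₀) (bacS_aux_le_one hp0 hpq₀ hs₀)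
        (bacS_aux_pos hp1 hpq₁ hs₁) (bacS_aux_le_one hp1 hpq₁ hs₁) H
        ((D:ℤ) - D') ((C:ℤ) - C') hdc
      push_cast at hkey
      exact hkey
end
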